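/- arXiv:1512.07532 — 8 statements merged into one kernel-verified Lean document; each statement's English description precedes it below -/
import Mathlib

section
/- For each positive integer d there exist constants c, C > 0 such that for all integers k ≥ 0: c·a_d(k) ≤ (log(k+2))^{d−1}/(k+1) ≤ C·a_d(k). -/
/-!
Splitting off the first coordinate gives the convolution recursion
`a_{d+1}(k) = ∑_{j ≤ k} a_d(k - j) / (j + 1)`, with `a_1(k) = 1 / (k + 1)`. Inductively
`a_{d+1}(k) ≍ ℓ(k)^d / (k + 1)` with `ℓ(k) = log (k + 2)`. For the upper bound, `ℓ` is monotone
and `∑_{j ≤ k} 1 / ((j + 1)(k - j + 1)) = 2 H_{k+1} / (k + 2) ≤ 4 ℓ(k) / (k + 1)`. For the lower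
bound, keep only `j ≤ k / 2`: there `k - j + 1 ≤ k + 1` and `ℓ(k - j) ≥ ℓ(k / 2) ≥ ℓ(k) / 2`,
while `∑_{j ≤ k / 2} 1 / (j + 1) = H_{k/2+1} ≥ ℓ(k / 2)`.
-/

/-- `adk d k = Σ_{n ∈ ℕ^d, n₁+⋯+n_d = k} 1/((n₁+1)⋯(n_d+1))`. -/
noncomputable def adk (d k : ℕ) : ℝ :=
  ∑ n ∈ Finset.Nat.antidiagonalTuple d k, ∏ i, (1 : ℝ) / ((n i : ℝ) + 1)

open Finset Real

theorem Finset.Nat.sum_antidiagonalTuple_succ {M : Type*} [AddCommMonoid M] (d k : ℕ)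
    (f : (Fin (d + 1) → ℕ) → M) :
    ∑ n ∈ Nat.antidiagonalTuple (d + 1) k, f n =
      ∑ p ∈ antidiagonal k, ∑ n ∈ Nat.antidiagonalTuple d p.2, f (Fin.cons p.1 n) := by
  rw [sum_sigma']
  refine sum_nbij' (fun n => ⟨(n 0, ∑ i, n (Fin.succ i)), Fin.tail n⟩)
    (fun p => Fin.cons p.1.1 p.2) ?_ ?_ ?_ ?_ ?_
  · intro n hn
    simp only [mem_sigma, HasAntidiagonal.mem_antidiagonal,
      Finset.Nat.mem_antidiagonalTuple] at hn ⊢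
    exact ⟨by rw [← hn, Fin.sum_univ_succ], rfl⟩
  · rintro ⟨⟨a, b⟩, n⟩ hn
    simp only [mem_sigma, HasAntidiagonal.mem_antidiagonal,
      Finset.Nat.mem_antidiagonalTuple] at hn ⊢
    simp [Fin.sum_univ_succ, hn.1, hn.2]
  · intro n _
    exact Fin.cons_self_tail n
  · rintro ⟨⟨a, b⟩, n⟩ hn
    simp only [mem_sigma, HasAntidiagonal.mem_antidiagonal,
      Finset.Nat.mem_antidiagonalTuple] at hn
    simp [hn.2]
  · intro n _
    rw [Fin.cons_self_tail n]

theorem adk_one (k : ℕ) : adk 1 k = ((k : ℝ) + 1)⁻¹ := by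
  simp [adk, Nat.antidiagonalTuple_one]

theorem adk_succ (d k : ℕ) :
    adk (d + 1) k = ∑ j ∈ range (k + 1), ((j : ℝ) + 1)⁻¹ * adk d (k - j) := by
  rw [adk, Nat.sum_antidiagonalTuple_succ, Nat.sum_antidiagonal_eq_sum_range_succ_mk]
  refine sum_congr rfl fun j _ => ?_
  simp [adk, mul_sum, Fin.prod_univ_succ, mul_comm]

theorem adk_nonneg (d k : ℕ) : 0 ≤ adk d k :=
  sum_nonneg fun _ _ => prod_nonneg fun _ _ => by positivity

theorem cast_harmonic_eq_sum (n : ℕ) : (harmonic n : ℝ) = ∑ j ∈ range n, ((j : ℝ) + 1)⁻¹ := by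
  simp [harmonic]

theorem sum_range_inv_mul_inv_reflect (k : ℕ) :
    ∑ j ∈ range (k + 1), ((j : ℝ) + 1)⁻¹ * (((k - j : ℕ) : ℝ) + 1)⁻¹ =
      2 / ((k : ℝ) + 2) * harmonic (k + 1) := by
  have partial_fractions : ∀ j ∈ range (k + 1), ((j : ℝ) + 1)⁻¹ * (((k - j : ℕ) : ℝ) + 1)⁻¹ =
      ((k : ℝ) + 2)⁻¹ * (((j : ℝ) + 1)⁻¹ + (((k - j : ℕ) : ℝ) + 1)⁻¹) := by
    intro j hj
    have hjk : j ≤ k := Nat.lt_succ_iff.mp (mem_range.mp hj)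
    have : (j : ℝ) ≤ k := by exact_mod_cast hjk
    have : (k : ℝ) - j + 1 ≠ 0 := by linarith
    rw [Nat.cast_sub hjk]
    field_simp
    ring
  have reflect : ∑ j ∈ range (k + 1), (((k - j : ℕ) : ℝ) + 1)⁻¹ =
      ∑ j ∈ range (k + 1), ((j : ℝ) + 1)⁻¹ := by
    simpa using sum_range_reflect (fun j => ((j : ℝ) + 1)⁻¹) (k + 1)
  rw [sum_congr rfl partial_fractions, ← mul_sum, sum_add_distrib, reflect, cast_harmonic_eq_sum]
  ring

theorem log_cast_add_two_nonneg (k : ℕ) : 0 ≤ log ((k : ℝ) + 2) :=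
  log_nonneg (by linarith [Nat.cast_nonneg (α := ℝ) k])

theorem log_cast_add_two_mono {j k : ℕ} (h : j ≤ k) : log ((j : ℝ) + 2) ≤ log ((k : ℝ) + 2) :=
  log_le_log (by positivity) (by gcongr)

theorem log_add_two_le_cast_harmonic (k : ℕ) : log ((k : ℝ) + 2) ≤ harmonic (k + 1) := by
  simpa [add_assoc, one_add_one_eq_two] using log_add_one_le_harmonic (k + 1)

theorem cast_harmonic_le_two_mul_log (k : ℕ) : (harmonic (k + 1) : ℝ) ≤ 2 * log ((k : ℝ) + 2) := by
  have one_lt_log_four : 1 < log 4 := by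
    rw [show (4 : ℝ) = 2 ^ 2 by norm_num, log_pow]
    push_cast
    linarith [log_two_gt_d9]
  calc (harmonic (k + 1) : ℝ) ≤ 1 + log ((k : ℝ) + 1) := by
        simpa using harmonic_le_one_add_log (k + 1)
    _ ≤ log (4 * ((k : ℝ) + 1)) := by
        rw [log_mul (by norm_num) (by positivity)]
        linarith
    _ ≤ log (((k : ℝ) + 2) ^ 2) := log_le_log (by positivity) (by nlinarith)
    _ = 2 * log ((k : ℝ) + 2) := by rw [log_pow]; norm_num

theorem log_add_two_le_two_mul_log_half_add_two (k : ℕ) :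
    log ((k : ℝ) + 2) ≤ 2 * log (((k / 2 : ℕ) : ℝ) + 2) := by
  have hk : (k : ℝ) ≤ 2 * ((k / 2 : ℕ) : ℝ) + 1 := by
    exact_mod_cast (by omega : k ≤ 2 * (k / 2) + 1)
  calc log ((k : ℝ) + 2) ≤ log ((((k / 2 : ℕ) : ℝ) + 2) ^ 2) :=
        log_le_log (by positivity) (by nlinarith [Nat.cast_nonneg (α := ℝ) (k / 2)])
    _ = 2 * log (((k / 2 : ℕ) : ℝ) + 2) := by rw [log_pow]; norm_num

theorem exists_adk_le (d : ℕ) :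
    ∃ C > 0, ∀ k : ℕ, adk (d + 1) k ≤ C * (log ((k : ℝ) + 2) ^ d / ((k : ℝ) + 1)) := by
  induction d with
  | zero => exact ⟨1, one_pos, fun k => by simp [adk_one, div_eq_inv_mul]⟩
  | succ d ih =>
    obtain ⟨C, hC, hle⟩ := ih
    refine ⟨4 * C, by positivity, fun k => ?_⟩
    set ℓ := log ((k : ℝ) + 2)
    have hℓ : 0 ≤ ℓ := log_cast_add_two_nonneg k
    have term_le : ∀ j ∈ range (k + 1), ((j : ℝ) + 1)⁻¹ * adk (d + 1) (k - j) ≤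
        C * ℓ ^ d * (((j : ℝ) + 1)⁻¹ * (((k - j : ℕ) : ℝ) + 1)⁻¹) := by
      intro j _
      calc ((j : ℝ) + 1)⁻¹ * adk (d + 1) (k - j)
          ≤ ((j : ℝ) + 1)⁻¹ *
              (C * (log (((k - j : ℕ) : ℝ) + 2) ^ d / (((k - j : ℕ) : ℝ) + 1))) := by
            gcongr; exact hle _
        _ ≤ ((j : ℝ) + 1)⁻¹ * (C * (ℓ ^ d / (((k - j : ℕ) : ℝ) + 1))) := by
            gcongr
            · exact log_cast_add_two_nonneg _
            · exact log_cast_add_two_mono (Nat.sub_le k j)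
        _ = C * ℓ ^ d * (((j : ℝ) + 1)⁻¹ * (((k - j : ℕ) : ℝ) + 1)⁻¹) := by ring
    calc adk (d + 2) k = ∑ j ∈ range (k + 1), ((j : ℝ) + 1)⁻¹ * adk (d + 1) (k - j) := adk_succ _ _
      _ ≤ C * ℓ ^ d * ∑ j ∈ range (k + 1), ((j : ℝ) + 1)⁻¹ * (((k - j : ℕ) : ℝ) + 1)⁻¹ := by
          rw [mul_sum]; exact sum_le_sum term_le
      _ = C * ℓ ^ d * (2 / ((k : ℝ) + 2) * harmonic (k + 1)) := by
          rw [sum_range_inv_mul_inv_reflect]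
      _ ≤ C * ℓ ^ d * (2 / ((k : ℝ) + 1) * (2 * ℓ)) := by
          gcongr
          · exact_mod_cast (harmonic_pos k.succ_ne_zero).le
          · linarith
          · exact cast_harmonic_le_two_mul_log k
      _ = 4 * C * (ℓ ^ (d + 1) / ((k : ℝ) + 1)) := by ring

theorem exists_le_adk (d : ℕ) :
    ∃ c > 0, ∀ k : ℕ, c * (log ((k : ℝ) + 2) ^ d / ((k : ℝ) + 1)) ≤ adk (d + 1) k := by
  induction d with
  | zero => exact ⟨1, one_pos, fun k => by simp [adk_one, div_eq_inv_mul]⟩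
  | succ d ih =>
    obtain ⟨c, hc, hle⟩ := ih
    refine ⟨c / 2 ^ (d + 1), by positivity, fun k => ?_⟩
    set ℓ := log ((k : ℝ) + 2)
    have hℓ : 0 ≤ ℓ := log_cast_add_two_nonneg k
    have half_le : ℓ / 2 ≤ log (((k / 2 : ℕ) : ℝ) + 2) := by
      linarith [log_add_two_le_two_mul_log_half_add_two k]
    have term_le : ∀ j ∈ range (k / 2 + 1),
        c * (ℓ / 2) ^ d / ((k : ℝ) + 1) * ((j : ℝ) + 1)⁻¹ ≤
          ((j : ℝ) + 1)⁻¹ * adk (d + 1) (k - j) := by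
      intro j hj
      have hjk : k / 2 ≤ k - j := by have := mem_range.mp hj; omega
      have half_le_sub : ℓ / 2 ≤ log (((k - j : ℕ) : ℝ) + 2) :=
        half_le.trans (log_cast_add_two_mono hjk)
      calc c * (ℓ / 2) ^ d / ((k : ℝ) + 1) * ((j : ℝ) + 1)⁻¹
          ≤ c * (log (((k - j : ℕ) : ℝ) + 2) ^ d / (((k - j : ℕ) : ℝ) + 1)) * ((j : ℝ) + 1)⁻¹ := by
            rw [mul_div_assoc]
            gcongr
            · exact pow_nonneg (log_cast_add_two_nonneg _) d
            · exact Nat.sub_le k j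
        _ ≤ adk (d + 1) (k - j) * ((j : ℝ) + 1)⁻¹ := by gcongr; exact hle _
        _ = ((j : ℝ) + 1)⁻¹ * adk (d + 1) (k - j) := mul_comm _ _
    calc c / 2 ^ (d + 1) * (ℓ ^ (d + 1) / ((k : ℝ) + 1))
        = c * (ℓ / 2) ^ d / ((k : ℝ) + 1) * (ℓ / 2) := by
          rw [div_pow, pow_succ, pow_succ]; field_simp
      _ ≤ c * (ℓ / 2) ^ d / ((k : ℝ) + 1) * harmonic (k / 2 + 1) := by
          gcongr
          exact half_le.trans (log_add_two_le_cast_harmonic _)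
      _ = ∑ j ∈ range (k / 2 + 1), c * (ℓ / 2) ^ d / ((k : ℝ) + 1) * ((j : ℝ) + 1)⁻¹ := by
          rw [cast_harmonic_eq_sum, mul_sum]
      _ ≤ ∑ j ∈ range (k / 2 + 1), ((j : ℝ) + 1)⁻¹ * adk (d + 1) (k - j) := sum_le_sum term_le
      _ ≤ ∑ j ∈ range (k + 1), ((j : ℝ) + 1)⁻¹ * adk (d + 1) (k - j) :=
          sum_le_sum_of_subset_of_nonneg (range_subset_range.2 (by omega))
            fun _ _ _ => mul_nonneg (by positivity) (adk_nonneg _ _)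
      _ = adk (d + 2) k := (adk_succ _ _).symm

/-- For each positive integer `d` there are constants `c, C > 0` such that for all `k ≥ 0`,
`c·a_d(k) ≤ (log(k+2))^{d−1}/(k+1) ≤ C·a_d(k)`. -/
theorem stmt_1 (d : ℕ) (hd : 0 < d) :
    ∃ c C : ℝ, 0 < c ∧ 0 < C ∧ ∀ k : ℕ,
      c * adk d k ≤ (Real.log ((k : ℝ) + 2)) ^ (d - 1) / ((k : ℝ) + 1) ∧
      (Real.log ((k : ℝ) + 2)) ^ (d - 1) / ((k : ℝ) + 1) ≤ C * adk d k := by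
  obtain ⟨e, rfl⟩ := Nat.exists_eq_add_one_of_ne_zero hd.ne'
  obtain ⟨c, hc, hc_le⟩ := exists_le_adk e
  obtain ⟨C, hC, hle_C⟩ := exists_adk_le e
  refine ⟨C⁻¹, c⁻¹, inv_pos.2 hC, inv_pos.2 hc, fun k => ⟨?_, ?_⟩⟩
  · rw [inv_mul_le_iff₀ hC]; exact hle_C k
  · rw [le_inv_mul_iff₀ hc]; exact hc_le k
end

section
/- For each positive integer d there exist constants c, C > 0 such that for all real t ∈ (0,1): c·((1/t)·log(1/(1−t)))^d ≤ Σ_{k=0}^∞ ((log(k+2))^{d−1}/(k+1))·t^k ≤ C·((1/t)·log(1/(1−t)))^d. -/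
/-!
Write `f t = t⁻¹ log (1 / (1 - t)) = ∑ tᵏ / (k + 1)`; then `f ^ d` has nonnegative Taylor
coefficients `c_d(k)`, the `d`-fold Cauchy convolution of `1 / (k + 1)`. With the harmonic numbers
`H = H_{k+1}`, induction on `d` gives `H ^ (d-1) / ((d-1)! (k+1)) ≤ c_d(k) ≤ 2 ^ (d-1) H ^ (d-1) / (k+1)`:
the upper bound from the partial fractions `1 / ((i+1)(j+1)) = (1/(i+1) + 1/(j+1)) / (k+2)` for
`i + j = k`, the lower bound from the discrete integral `∑_{i ≤ k} H_{i+1} ^ m / (i+1) ≥ H ^ (m+1) / (m+1)`.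
As `H_{k+1} ≍ log (k+2)`, the coefficients of the given series are comparable to `c_d(k)`.
-/

open Finset PowerSeries
open scoped Nat

lemma harmonic_mono : Monotone harmonic :=
  monotone_nat_of_le_succ fun n => by rw [harmonic_succ]; exact le_add_of_nonneg_right (by positivity)

lemma cast_harmonic_nonneg (n : ℕ) : (0 : ℝ) ≤ harmonic n :=
  Rat.cast_nonneg.2 (harmonic_mono n.zero_le)

lemma cast_harmonic_succ (n : ℕ) : (harmonic (n + 1) : ℝ) = harmonic n + 1 / ((n : ℝ) + 1) := by
  simp [harmonic_succ]

lemma sum_range_inv_eq_harmonic (n : ℕ) :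
    ∑ i ∈ range n, 1 / ((i : ℝ) + 1) = harmonic n := by
  simp [harmonic]

lemma pow_succ_sub_pow_succ_le {x y : ℝ} (m : ℕ) (hy : 0 ≤ y) (hyx : y ≤ x) :
    x ^ (m + 1) - y ^ (m + 1) ≤ (m + 1) * x ^ m * (x - y) := by
  have h := abs_pow_sub_pow_le x y (m + 1)
  rw [abs_of_nonneg (sub_nonneg.2 (pow_le_pow_left₀ hy hyx _)), abs_of_nonneg (sub_nonneg.2 hyx),
    abs_of_nonneg (hy.trans hyx), abs_of_nonneg hy, max_eq_left hyx] at h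
  push_cast at h
  linarith

lemma harmonic_pow_succ_div_le_sum (m n : ℕ) :
    (harmonic n : ℝ) ^ (m + 1) / (m + 1) ≤ ∑ i ∈ range n, (harmonic (i + 1) : ℝ) ^ m / (i + 1) := by
  induction n with
  | zero => simp
  | succ n ih =>
    have step := pow_succ_sub_pow_succ_le m (cast_harmonic_nonneg n)
      (by exact_mod_cast harmonic_mono n.le_succ : (harmonic n : ℝ) ≤ harmonic (n + 1))
    rw [cast_harmonic_succ n, add_sub_cancel_left, ← cast_harmonic_succ] at step
    calc (harmonic (n + 1) : ℝ) ^ (m + 1) / (m + 1)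
        = (harmonic n : ℝ) ^ (m + 1) / (m + 1)
          + ((harmonic (n + 1) : ℝ) ^ (m + 1) - (harmonic n : ℝ) ^ (m + 1)) / (m + 1) := by ring
      _ ≤ _ := by
        rw [sum_range_succ]
        refine add_le_add ih ?_
        rw [div_le_iff₀ (by positivity)]
        linarith [show (m + 1 : ℝ) * harmonic (n + 1) ^ m * (1 / (n + 1))
          = harmonic (n + 1) ^ m / (n + 1) * (m + 1) by ring]

/-- The Taylor series of `t ↦ t⁻¹ log (1 / (1 - t))`. -/
noncomputable def logSeries : PowerSeries ℝ := mk fun k => 1 / ((k : ℝ) + 1)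

@[simp] lemma coeff_logSeries (k : ℕ) : coeff k logSeries = 1 / ((k : ℝ) + 1) := coeff_mk _ _

lemma coeff_logSeries_pow_nonneg (d k : ℕ) : 0 ≤ coeff k (logSeries ^ d) := by
  induction d generalizing k with
  | zero => rw [pow_zero, coeff_one]; split_ifs <;> norm_num
  | succ d ih =>
    rw [pow_succ, coeff_mul]
    exact sum_nonneg fun p _ => mul_nonneg (ih _) (by rw [coeff_logSeries]; positivity)

lemma hasSum_logSeries {t : ℝ} (ht0 : 0 < t) (ht1 : t < 1) :
    HasSum (fun k => coeff k logSeries * t ^ k) (1 / t * Real.log (1 / (1 - t))) := by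
  have h := (Real.hasSum_pow_div_log_of_abs_lt_one (abs_lt.2 ⟨by linarith, ht1⟩)).mul_left (1 / t)
  rw [one_div (1 - t), Real.log_inv]
  refine h.congr_fun fun k => ?_
  rw [coeff_logSeries, pow_succ]
  field_simp

lemma PowerSeries.hasSum_coeff_mul_of_nonneg {p q : PowerSeries ℝ} {t a b : ℝ}
    (hp0 : ∀ k, 0 ≤ coeff k p) (hq0 : ∀ k, 0 ≤ coeff k q) (ht : 0 ≤ t)
    (hp : HasSum (fun k => coeff k p * t ^ k) a) (hq : HasSum (fun k => coeff k q * t ^ k) b) :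
    HasSum (fun k => coeff k (p * q) * t ^ k) (a * b) := by
  have hterm : ∀ k, coeff k (p * q) * t ^ k =
      ∑ x ∈ antidiagonal k, coeff x.1 p * t ^ x.1 * (coeff x.2 q * t ^ x.2) := by
    intro k
    rw [coeff_mul, sum_mul]
    refine sum_congr rfl fun x hx => ?_
    rw [← mem_antidiagonal.1 hx, pow_add]
    ring
  have hnorm : ∀ {r : PowerSeries ℝ}, (∀ k, 0 ≤ coeff k r) →
      (fun k => ‖coeff k r * t ^ k‖) = fun k => coeff k r * t ^ k := fun hr0 =>
    funext fun k => Real.norm_of_nonneg (mul_nonneg (hr0 k) (pow_nonneg ht k))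
  have hp' : Summable fun k => ‖coeff k p * t ^ k‖ := by rw [hnorm hp0]; exact hp.summable
  have hq' : Summable fun k => ‖coeff k q * t ^ k‖ := by rw [hnorm hq0]; exact hq.summable
  simp_rw [hterm]
  rw [← hp.tsum_eq, ← hq.tsum_eq, tsum_mul_tsum_eq_tsum_sum_antidiagonal_of_summable_norm hp' hq']
  exact (summable_sum_mul_antidiagonal_of_summable_norm' hp' hp.summable hq' hq.summable).hasSum

lemma hasSum_logSeries_pow (d : ℕ) {t : ℝ} (ht0 : 0 < t) (ht1 : t < 1) :
    HasSum (fun k => coeff k (logSeries ^ d) * t ^ k) ((1 / t * Real.log (1 / (1 - t))) ^ d) := by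
  induction d with
  | zero =>
    simp only [pow_zero, coeff_one]
    convert hasSum_ite_eq 0 (1 : ℝ) using 2 with k
    split_ifs <;> simp_all
  | succ d ih =>
    rw [pow_succ, pow_succ]
    exact hasSum_coeff_mul_of_nonneg (coeff_logSeries_pow_nonneg d)
      (fun k => by rw [coeff_logSeries]; positivity) ht0.le ih (hasSum_logSeries ht0 ht1)

lemma sum_antidiagonal_inv_fst (k : ℕ) :
    ∑ p ∈ antidiagonal k, 1 / ((p.1 : ℝ) + 1) = harmonic (k + 1) := by
  rw [Nat.sum_antidiagonal_eq_sum_range_succ_mk, sum_range_inv_eq_harmonic]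

lemma sum_antidiagonal_inv_snd (k : ℕ) :
    ∑ p ∈ antidiagonal k, 1 / ((p.2 : ℝ) + 1) = harmonic (k + 1) := by
  rw [← Nat.sum_antidiagonal_swap]
  exact sum_antidiagonal_inv_fst k

lemma coeff_logSeries_pow_succ_le (d k : ℕ) :
    coeff k (logSeries ^ (d + 1)) ≤ 2 ^ d * (harmonic (k + 1) : ℝ) ^ d / (k + 1) := by
  induction d generalizing k with
  | zero => simp
  | succ d ih =>
    set H : ℝ := (harmonic (k + 1) : ℝ)
    rw [pow_succ, coeff_mul]
    calc ∑ p ∈ antidiagonal k, coeff p.1 (logSeries ^ (d + 1)) * coeff p.2 logSeries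
        ≤ ∑ p ∈ antidiagonal k, 2 ^ d * H ^ d * (1 / ((p.1 : ℝ) + 1) * (1 / ((p.2 : ℝ) + 1))) := by
          refine sum_le_sum fun p hp => ?_
          have hH : (harmonic (p.1 + 1) : ℝ) ≤ H :=
            Rat.cast_le.2 (harmonic_mono (Nat.succ_le_succ (HasAntidiagonal.antidiagonal.fst_le hp)))
          rw [coeff_logSeries]
          calc coeff p.1 (logSeries ^ (d + 1)) * (1 / ((p.2 : ℝ) + 1))
              ≤ 2 ^ d * (harmonic (p.1 + 1) : ℝ) ^ d / (p.1 + 1) * (1 / ((p.2 : ℝ) + 1)) := by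
                gcongr; exact ih p.1
            _ ≤ 2 ^ d * H ^ d / (p.1 + 1) * (1 / ((p.2 : ℝ) + 1)) := by
                gcongr; exact cast_harmonic_nonneg _
            _ = _ := by ring
      _ = 2 ^ d * H ^ d / (k + 2) *
            ∑ p ∈ antidiagonal k, (1 / ((p.1 : ℝ) + 1) + 1 / ((p.2 : ℝ) + 1)) := by
          rw [mul_sum]
          refine sum_congr rfl fun p hp => ?_
          have hk : (p.1 : ℝ) + p.2 = k := by exact_mod_cast mem_antidiagonal.1 hp
          rw [← hk]
          field_simp
          ring
      _ = 2 ^ (d + 1) * H ^ (d + 1) / (k + 2) := by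
          rw [sum_add_distrib, sum_antidiagonal_inv_fst, sum_antidiagonal_inv_snd]
          ring
      _ ≤ 2 ^ (d + 1) * H ^ (d + 1) / (k + 1) := by
          have := cast_harmonic_nonneg (k + 1)
          gcongr
          linarith

lemma harmonic_pow_div_le_coeff_logSeries_pow_succ (d k : ℕ) :
    (harmonic (k + 1) : ℝ) ^ d / (d ! * (k + 1)) ≤ coeff k (logSeries ^ (d + 1)) := by
  induction d generalizing k with
  | zero => simp
  | succ d ih =>
    rw [pow_succ logSeries, coeff_mul]
    calc (harmonic (k + 1) : ℝ) ^ (d + 1) / ((d + 1)! * (k + 1))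
        = (harmonic (k + 1) : ℝ) ^ (d + 1) / (d + 1) / (d ! * (k + 1)) := by
          push_cast [Nat.factorial_succ]
          field_simp
      _ ≤ (∑ i ∈ range (k + 1), (harmonic (i + 1) : ℝ) ^ d / (i + 1)) / (d ! * (k + 1)) := by
          gcongr
          exact harmonic_pow_succ_div_le_sum d (k + 1)
      _ = ∑ p ∈ antidiagonal k,
            (harmonic (p.1 + 1) : ℝ) ^ d / (d ! * (p.1 + 1)) * (1 / ((k : ℝ) + 1)) := by
          rw [Nat.sum_antidiagonal_eq_sum_range_succ_mk, sum_div]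
          refine sum_congr rfl fun i _ => ?_
          field_simp
      _ ≤ ∑ p ∈ antidiagonal k, coeff p.1 (logSeries ^ (d + 1)) * coeff p.2 logSeries := by
          refine sum_le_sum fun p hp => ?_
          rw [coeff_logSeries]
          gcongr
          · exact coeff_logSeries_pow_nonneg _ _
          · exact ih p.1
          · exact_mod_cast HasAntidiagonal.antidiagonal.snd_le hp

lemma log_le_harmonic_succ (k : ℕ) : Real.log ((k : ℝ) + 2) ≤ harmonic (k + 1) := by
  have h := log_add_one_le_harmonic (k + 1)
  push_cast at h
  rwa [add_assoc, one_add_one_eq_two] at h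

lemma harmonic_succ_le_mul_log (k : ℕ) :
    (harmonic (k + 1) : ℝ) ≤ (1 + 1 / Real.log 2) * Real.log ((k : ℝ) + 2) := by
  have hlog2 : 0 < Real.log 2 := Real.log_pos one_lt_two
  have h2 : 1 ≤ Real.log ((k : ℝ) + 2) / Real.log 2 :=
    (one_le_div hlog2).2 (Real.log_le_log two_pos (by simp))
  have h1 : Real.log ((k : ℝ) + 1) ≤ Real.log ((k : ℝ) + 2) :=
    Real.log_le_log (by positivity) (by linarith)
  have h := harmonic_le_one_add_log (k + 1)
  push_cast at h
  calc (harmonic (k + 1) : ℝ) ≤ Real.log ((k : ℝ) + 2) / Real.log 2 + Real.log ((k : ℝ) + 2) := by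
        linarith
    _ = _ := by ring

lemma coeff_logSeries_pow_succ_le_log (m k : ℕ) :
    coeff k (logSeries ^ (m + 1)) ≤
      (2 * (1 + 1 / Real.log 2)) ^ m * (Real.log ((k : ℝ) + 2) ^ m / (k + 1)) := by
  calc coeff k (logSeries ^ (m + 1)) ≤ 2 ^ m * (harmonic (k + 1) : ℝ) ^ m / (k + 1) :=
        coeff_logSeries_pow_succ_le m k
    _ ≤ 2 ^ m * ((1 + 1 / Real.log 2) * Real.log ((k : ℝ) + 2)) ^ m / (k + 1) := by
        gcongr
        · exact cast_harmonic_nonneg _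
        · exact harmonic_succ_le_mul_log k
    _ = _ := by simp only [mul_pow]; ring

lemma log_natCast_add_two_nonneg (k : ℕ) : 0 ≤ Real.log ((k : ℝ) + 2) :=
  Real.log_nonneg (by linarith [k.cast_nonneg (α := ℝ)])

lemma log_pow_div_le_coeff_logSeries_pow_succ (m k : ℕ) :
    Real.log ((k : ℝ) + 2) ^ m / (k + 1) ≤ m ! * coeff k (logSeries ^ (m + 1)) := by
  have := log_natCast_add_two_nonneg k
  calc Real.log ((k : ℝ) + 2) ^ m / (k + 1)
      ≤ (harmonic (k + 1) : ℝ) ^ m / (k + 1) := by gcongr; exact log_le_harmonic_succ k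
    _ = m ! * ((harmonic (k + 1) : ℝ) ^ m / (m ! * (k + 1))) := by field_simp
    _ ≤ m ! * coeff k (logSeries ^ (m + 1)) := by
        gcongr; exact harmonic_pow_div_le_coeff_logSeries_pow_succ m k

lemma mul_le_tsum_and_tsum_le_mul {ι : Type*} {u v : ι → ℝ} {S α β : ℝ} (hv : HasSum v S)
    (hu : ∀ i, 0 ≤ u i) (hαu : ∀ i, α * v i ≤ u i) (huβ : ∀ i, u i ≤ β * v i) :
    α * S ≤ ∑' i, u i ∧ ∑' i, u i ≤ β * S := by
  have hus : Summable u := (hv.summable.mul_left β).of_nonneg_of_le hu huβ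
  exact ⟨hasSum_le hαu (hv.mul_left α) hus.hasSum, hasSum_le huβ hus.hasSum (hv.mul_left β)⟩

/-- For each positive integer `d` there are constants `c, C > 0` such that for all `t ∈ (0,1)`,
`c·((1/t)·log(1/(1−t)))^d ≤ Σ_{k=0}^∞ ((log(k+2))^{d−1}/(k+1))·t^k ≤ C·((1/t)·log(1/(1−t)))^d`. -/
theorem stmt_2 (d : ℕ) (hd : 0 < d) :
    ∃ c C : ℝ, 0 < c ∧ 0 < C ∧ ∀ t : ℝ, 0 < t → t < 1 →
      c * (1 / t * Real.log (1 / (1 - t))) ^ d ≤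
          (∑' k : ℕ, (Real.log ((k : ℝ) + 2)) ^ (d - 1) / ((k : ℝ) + 1) * t ^ k) ∧
      (∑' k : ℕ, (Real.log ((k : ℝ) + 2)) ^ (d - 1) / ((k : ℝ) + 1) * t ^ k) ≤
          C * (1 / t * Real.log (1 / (1 - t))) ^ d := by
  obtain ⟨m, rfl⟩ : ∃ m, d = m + 1 := ⟨d - 1, by omega⟩
  have hB : 0 < 2 * (1 + 1 / Real.log 2) := by have := Real.log_pos one_lt_two; positivity
  refine ⟨((2 * (1 + 1 / Real.log 2)) ^ m)⁻¹, m !, by positivity, by positivity, fun t ht0 ht1 => ?_⟩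
  rw [Nat.add_sub_cancel]
  refine mul_le_tsum_and_tsum_le_mul (hasSum_logSeries_pow (m + 1) ht0 ht1) (fun k => ?_)
    (fun k => ?_) (fun k => ?_)
  · have := log_natCast_add_two_nonneg k
    positivity
  · rw [← mul_assoc]
    gcongr ?_ * _
    rw [inv_mul_le_iff₀ (by positivity)]
    exact coeff_logSeries_pow_succ_le_log m k
  · rw [← mul_assoc]
    gcongr
    exact log_pow_div_le_coeff_logSeries_pow_succ m k
end

section
/- Let d be a positive integer. There exist constants c, C > 0 such that for all integers k ≥ d: c·(log(k+2))^{d−1}/(k+1) ≤ ∫₀¹ t^k·((1/t)·log(1/(1−t)))^{d−1} dt ≤ C·(log(k+2))^{d−1}/(k+1). -/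
/-!
Write `L t = log (1 / (1 - t))`; for `m ≤ k` the integrand is `t ^ (k - m) * L t ^ m`, and the
mass of `t ^ n` sits at distance about `1 / n` from `1`, where `L` is about `log n`.

Lower bound: on `[1 - 1 / (2 (k + 1)), 1)` Bernoulli gives `t ^ k ≥ 1 / 2`, and there
`L ≥ log (k + 2)`.

Upper bound: split at `1 - 1 / B` with `B = n + 2`. Below it `L ≤ log B`, which contributes at
most `log B ^ m / (n + 1)`. Above it `L = log B + log x` with `x = 1 / (B (1 - t)) ≥ 1`, so
`L ^ m ≤ (1 + log B) ^ m (1 + log x) ^ m ≲ log B ^ m x ^ (1 / 2)`, whose integral is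
`≲ log B ^ m / B`.
-/

open MeasureTheory Set Real

lemma pow_one_add_log_le_rpow (m : ℕ) {x : ℝ} (hx : 1 ≤ x) :
    (1 + log x) ^ m ≤ (2 * m + 3) ^ m * x ^ (1 / 2 : ℝ) := by
  set p : ℝ := (2 * (m + 1))⁻¹
  have hp : 0 < p := by positivity
  have hlog : log x ≤ 2 * (m + 1) * x ^ p := by
    simpa [p, div_eq_mul_inv, mul_comm] using log_le_rpow_div (by linarith) hp
  have hxp : 1 ≤ x ^ p := one_le_rpow hx hp.le
  have hbase : 1 + log x ≤ (2 * m + 3) * x ^ p := by nlinarith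
  calc (1 + log x) ^ m ≤ ((2 * m + 3) * x ^ p) ^ m :=
        pow_le_pow_left₀ (by linarith [log_nonneg hx]) hbase m
    _ = (2 * m + 3) ^ m * x ^ (p * m) := by
        rw [mul_pow, ← rpow_natCast (x ^ p), ← rpow_mul (by linarith)]
    _ ≤ (2 * m + 3) ^ m * x ^ (1 / 2 : ℝ) := by
        gcongr
        rw [inv_mul_le_iff₀ (by positivity)]; linarith

lemma integral_mul_one_sub_rpow_neg_half {B : ℝ} (hB : 0 < B) :
    ∫ t in (1 - B⁻¹)..1, (B * (1 - t)) ^ (-(1 / 2) : ℝ) = 2 / B := by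
  simp_rw [mul_one_sub]
  rw [intervalIntegral.integral_comp_sub_mul (fun x => x ^ (-(1 / 2) : ℝ)) hB.ne',
    integral_rpow (by norm_num)]
  have h1 : B - B * (1 - B⁻¹) = 1 := by field_simp; ring
  norm_num [h1]
  field_simp

lemma integrableOn_mul_one_sub_rpow_neg_half {B : ℝ} (hB : 0 < B) :
    IntegrableOn (fun t => (B * (1 - t)) ^ (-(1 / 2) : ℝ)) (Ico (1 - B⁻¹) 1) := by
  have h := intervalIntegral.intervalIntegrable_of_integral_ne_zero
    ((integral_mul_one_sub_rpow_neg_half hB).trans_ne (by positivity))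
  rw [intervalIntegrable_iff_integrableOn_Ioc_of_le (by simp [hB.le])] at h
  exact (integrableOn_Ico_iff_integrableOn_Ioo (by finiteness)).2
    ((integrableOn_Ioc_iff_integrableOn_Ioo (by finiteness)).1 h)

lemma setIntegral_mul_one_sub_rpow_neg_half {B : ℝ} (hB : 0 < B) :
    ∫ t in Ico (1 - B⁻¹) 1, (B * (1 - t)) ^ (-(1 / 2) : ℝ) = 2 / B := by
  rw [integral_Ico_eq_integral_Ioo, ← integral_Ioc_eq_integral_Ioo,
    ← intervalIntegral.integral_of_le (by simp [hB.le]), integral_mul_one_sub_rpow_neg_half hB]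

lemma log_one_div_one_sub_nonneg {t : ℝ} (ht0 : 0 ≤ t) (ht1 : t < 1) :
    0 ≤ log (1 / (1 - t)) :=
  log_nonneg (by rw [le_div_iff₀ (by linarith)]; linarith)

lemma pow_mul_log_pow_le_log_pow (n m : ℕ) {t : ℝ} (ht0 : 0 ≤ t) (ht1 : t < 1) :
    t ^ n * log (1 / (1 - t)) ^ m ≤ log (1 / (1 - t)) ^ m :=
  mul_le_of_le_one_left (pow_nonneg (log_one_div_one_sub_nonneg ht0 ht1) m)
    (pow_le_one₀ ht0 ht1.le)

lemma log_one_div_one_sub_le_log {B t : ℝ} (hB : 0 < B) (ht : t ≤ 1 - B⁻¹) :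
    log (1 / (1 - t)) ≤ log B := by
  have : B⁻¹ ≤ 1 - t := by linarith
  rw [one_div]
  exact log_le_log (inv_pos.2 ((inv_pos.2 hB).trans_le this)) (inv_le_of_inv_le₀ hB this)

lemma log_le_log_one_div_one_sub {B t : ℝ} (hB : 0 < B) (ht : 1 - B⁻¹ ≤ t) (ht1 : t < 1) :
    log B ≤ log (1 / (1 - t)) := by
  have : 1 - t ≤ B⁻¹ := by linarith
  exact log_le_log hB (by rw [one_div]; exact le_inv_of_le_inv₀ (by linarith) this)

lemma log_one_div_one_sub_pow_le {B t : ℝ} (hB : 1 ≤ B) (ht : 1 - B⁻¹ ≤ t) (ht1 : t < 1)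
    (m : ℕ) : log (1 / (1 - t)) ^ m ≤
      (2 * m + 3) ^ m * (1 + log B) ^ m * (B * (1 - t)) ^ (-(1 / 2) : ℝ) := by
  have hB0 : 0 < B := by linarith
  have hv0 : 0 < B * (1 - t) := mul_pos hB0 (by linarith)
  have hx : 1 ≤ (B * (1 - t))⁻¹ := by
    rw [one_le_inv₀ hv0]
    nlinarith [mul_inv_cancel₀ hB0.ne']
  have hsplit : log (1 / (1 - t)) = log B + log (B * (1 - t))⁻¹ := by
    rw [← log_mul hB0.ne' (by positivity)]
    field_simp
  have hlogB := log_nonneg hB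
  have hlogx := log_nonneg hx
  calc log (1 / (1 - t)) ^ m ≤ ((1 + log B) * (1 + log (B * (1 - t))⁻¹)) ^ m := by
        rw [hsplit]
        exact pow_le_pow_left₀ (by positivity) (by nlinarith) m
    _ ≤ (1 + log B) ^ m * ((2 * m + 3) ^ m * ((B * (1 - t))⁻¹) ^ (1 / 2 : ℝ)) := by
        rw [mul_pow]
        gcongr
        exact pow_one_add_log_le_rpow m hx
    _ = (2 * m + 3) ^ m * (1 + log B) ^ m * (B * (1 - t)) ^ (-(1 / 2) : ℝ) := by
        rw [inv_rpow hv0.le, ← rpow_neg hv0.le]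
        ring

lemma integrableOn_pow_mul_log_pow (n m : ℕ) :
    IntegrableOn (fun t : ℝ => t ^ n * log (1 / (1 - t)) ^ m) (Ioo 0 1) := by
  have hg :
      IntegrableOn (fun t : ℝ => (2 * m + 3) ^ m * (1 - t) ^ (-(1 / 2) : ℝ)) (Ico 0 1) := by
    simpa [IntegrableOn] using
      (integrableOn_mul_one_sub_rpow_neg_half one_pos).const_mul ((2 * m + 3) ^ m)
  refine (hg.mono_set Ioo_subset_Ico_self).mono' (by fun_prop) ?_
  filter_upwards [ae_restrict_mem measurableSet_Ioo] with t ⟨ht0, ht1⟩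
  have hL := log_one_div_one_sub_nonneg ht0.le ht1
  rw [norm_of_nonneg (by positivity)]
  calc t ^ n * log (1 / (1 - t)) ^ m ≤ log (1 / (1 - t)) ^ m :=
        pow_mul_log_pow_le_log_pow n m ht0.le ht1
    _ ≤ _ := by simpa using log_one_div_one_sub_pow_le le_rfl (by simp [ht0.le]) ht1 m

lemma setIntegral_Ioo_pow_mul_log_pow_le {B : ℝ} (hB : 1 ≤ B) (n m : ℕ) :
    ∫ t in Ioo 0 (1 - B⁻¹), t ^ n * log (1 / (1 - t)) ^ m ≤ log B ^ m / (n + 1) := by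
  have hB0 : 0 < B := by linarith
  have hsub : Ioo 0 (1 - B⁻¹) ⊆ Ioo (0 : ℝ) 1 := Ioo_subset_Ioo_right (by simp [hB0.le])
  have hg : IntegrableOn (fun t : ℝ => log B ^ m * t ^ n) (Ioo 0 1) :=
    (Continuous.integrableOn_Icc (by fun_prop)).mono_set Ioo_subset_Icc_self
  calc ∫ t in Ioo 0 (1 - B⁻¹), t ^ n * log (1 / (1 - t)) ^ m
      ≤ ∫ t in Ioo 0 (1 - B⁻¹), log B ^ m * t ^ n := by
        refine setIntegral_mono_on ((integrableOn_pow_mul_log_pow n m).mono_set hsub)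
          (hg.mono_set hsub) measurableSet_Ioo fun t ht => ?_
        have hL := log_one_div_one_sub_nonneg ht.1.le (hsub ht).2
        rw [mul_comm]
        exact mul_le_mul_of_nonneg_right
          (pow_le_pow_left₀ hL (log_one_div_one_sub_le_log hB0 ht.2.le) m) (pow_nonneg ht.1.le n)
    _ ≤ ∫ t in Ioo 0 1, log B ^ m * t ^ n :=
        setIntegral_mono_set hg
          (ae_restrict_of_forall_mem measurableSet_Ioo fun t ht => by
            have := log_nonneg hB; have := ht.1; positivity)
          hsub.eventuallyLE
    _ = log B ^ m / (n + 1) := by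
        rw [integral_Ioc_eq_integral_Ioo.symm, ← intervalIntegral.integral_of_le zero_le_one,
          intervalIntegral.integral_const_mul, integral_pow]
        simp [div_eq_mul_inv]

lemma setIntegral_Ico_pow_mul_log_pow_le {B : ℝ} (hB : 1 < B) (n m : ℕ) :
    ∫ t in Ico (1 - B⁻¹) 1, t ^ n * log (1 / (1 - t)) ^ m ≤
      2 * (2 * m + 3) ^ m * (1 + log B) ^ m / B := by
  have hB0 : 0 < B := by linarith
  have ha : 0 < 1 - B⁻¹ := sub_pos.2 (inv_lt_one_of_one_lt₀ hB)
  calc ∫ t in Ico (1 - B⁻¹) 1, t ^ n * log (1 / (1 - t)) ^ m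
      ≤ ∫ t in Ico (1 - B⁻¹) 1,
          (2 * m + 3) ^ m * (1 + log B) ^ m * (B * (1 - t)) ^ (-(1 / 2) : ℝ) := by
        refine setIntegral_mono_on
          ((integrableOn_pow_mul_log_pow n m).mono_set fun t ht => ⟨ha.trans_le ht.1, ht.2⟩)
          ((integrableOn_mul_one_sub_rpow_neg_half hB0).const_mul _) measurableSet_Ico
          fun t ht => ?_
        have ht0 : 0 ≤ t := ha.le.trans ht.1
        calc t ^ n * log (1 / (1 - t)) ^ m ≤ log (1 / (1 - t)) ^ m :=
              pow_mul_log_pow_le_log_pow n m ht0 ht.2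
          _ ≤ _ := log_one_div_one_sub_pow_le hB.le ht.1 ht.2 m
    _ = 2 * (2 * m + 3) ^ m * (1 + log B) ^ m / B := by
        rw [integral_const_mul, setIntegral_mul_one_sub_rpow_neg_half hB0]
        ring

lemma setIntegral_pow_mul_log_pow_le {n : ℕ} (hn : 1 ≤ n) (m : ℕ) :
    ∫ t in Ioo 0 1, t ^ n * log (1 / (1 - t)) ^ m ≤
      (1 + 2 ^ (m + 1) * (2 * m + 3) ^ m) * (log (n + 2) ^ m / (n + 1)) := by
  set B : ℝ := n + 2
  have hn' : (1 : ℝ) ≤ n := by exact_mod_cast hn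
  have hB : 1 < B := by simp only [B]; linarith
  have hlogB : 1 ≤ log B :=
    (le_log_iff_exp_le (by linarith)).2 (by simp only [B]; linarith [exp_one_lt_d9])
  have ha : 0 < 1 - B⁻¹ := sub_pos.2 (inv_lt_one_of_one_lt₀ hB)
  have hf := integrableOn_pow_mul_log_pow n m
  have hsplit : ∫ t in Ioo 0 1, t ^ n * log (1 / (1 - t)) ^ m =
      (∫ t in Ioo 0 (1 - B⁻¹), t ^ n * log (1 / (1 - t)) ^ m) +
        ∫ t in Ico (1 - B⁻¹) 1, t ^ n * log (1 / (1 - t)) ^ m := by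
    have ha1 : 1 - B⁻¹ ≤ 1 := sub_le_self _ (inv_nonneg.2 (by linarith))
    rw [← Ioo_union_Ico_eq_Ioo ha ha1]
    exact setIntegral_union (Ico_disjoint_Ico_same.mono_left Ioo_subset_Ico_self) measurableSet_Ico
      (hf.mono_set (Ioo_subset_Ioo_right ha1))
      (hf.mono_set fun t ht => ⟨ha.trans_le ht.1, ht.2⟩)
  have htail : 2 * (2 * m + 3) ^ m * (1 + log B) ^ m / B ≤
      2 ^ (m + 1) * (2 * m + 3) ^ m * (log B ^ m / (n + 1)) := by
    have : (1 + log B) ^ m ≤ 2 ^ m * log B ^ m := by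
      rw [← mul_pow]; exact pow_le_pow_left₀ (by positivity) (by linarith) m
    calc 2 * (2 * m + 3) ^ m * (1 + log B) ^ m / B
        ≤ 2 * (2 * m + 3) ^ m * (2 ^ m * log B ^ m) / (n + 1) := by
          gcongr
          simp only [B]; linarith
      _ = _ := by ring
  calc ∫ t in Ioo 0 1, t ^ n * log (1 / (1 - t)) ^ m
      ≤ log B ^ m / (n + 1) + 2 * (2 * m + 3) ^ m * (1 + log B) ^ m / B := by
        rw [hsplit]
        exact add_le_add (setIntegral_Ioo_pow_mul_log_pow_le hB.le n m)
          (setIntegral_Ico_pow_mul_log_pow_le hB n m)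
    _ ≤ _ := by linarith

lemma half_mul_log_pow_le_pow_mul_log_pow {n k : ℕ} (hnk : n ≤ k) (m : ℕ) {t : ℝ}
    (ht : 1 - (2 * ((k : ℝ) + 1))⁻¹ ≤ t) (ht1 : t < 1) :
    1 / 2 * log (k + 2) ^ m ≤ t ^ n * log (1 / (1 - t)) ^ m := by
  have hk : (0 : ℝ) ≤ k := k.cast_nonneg
  have hdist : 2 * (k + 1) * (1 - t) ≤ 1 :=
    (le_inv_mul_iff₀ (by positivity)).1 (by rw [mul_one]; linarith)
  have ht0 : 0 ≤ t := by nlinarith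
  have hpow : 1 / 2 ≤ t ^ n :=
    calc (1 / 2 : ℝ) ≤ 1 + k * (t - 1) := by nlinarith
      _ ≤ (1 + (t - 1)) ^ k := one_add_mul_le_pow (by linarith) k
      _ = t ^ k := by ring
      _ ≤ t ^ n := pow_le_pow_of_le_one ht0 ht1.le hnk
  have hlog : log (k + 2) ≤ log (1 / (1 - t)) :=
    (log_le_log (by positivity) (by linarith : (k : ℝ) + 2 ≤ 2 * (k + 1))).trans
      (log_le_log_one_div_one_sub (by positivity) ht ht1)
  exact mul_le_mul hpow (pow_le_pow_left₀ (log_nonneg (by linarith)) hlog m)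
    (pow_nonneg (log_nonneg (by linarith)) m) (pow_nonneg ht0 n)

lemma le_setIntegral_pow_mul_log_pow {n k : ℕ} (hnk : n ≤ k) (m : ℕ) :
    1 / 4 * (log (k + 2) ^ m / (k + 1)) ≤ ∫ t in Ioo 0 1, t ^ n * log (1 / (1 - t)) ^ m := by
  set B : ℝ := 2 * (k + 1)
  have hB : 1 < B := by simp only [B]; linarith [(k.cast_nonneg : (0 : ℝ) ≤ k)]
  have ha : 0 < 1 - B⁻¹ := sub_pos.2 (inv_lt_one_of_one_lt₀ hB)
  have hsub : Ico (1 - B⁻¹) 1 ⊆ Ioo (0 : ℝ) 1 := fun t ht => ⟨ha.trans_le ht.1, ht.2⟩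
  calc 1 / 4 * (log (k + 2) ^ m / (k + 1))
      = ∫ t in Ico (1 - B⁻¹) 1, 1 / 2 * log (k + 2) ^ m := by
        rw [setIntegral_const, smul_eq_mul,
          Real.volume_real_Ico_of_le (sub_le_self _ (inv_nonneg.2 (by linarith)))]
        simp only [B]; field_simp; ring
    _ ≤ ∫ t in Ico (1 - B⁻¹) 1, t ^ n * log (1 / (1 - t)) ^ m :=
        setIntegral_mono_on (integrableOn_const measure_Ico_lt_top.ne)
          ((integrableOn_pow_mul_log_pow n m).mono_set hsub) measurableSet_Ico
          fun t ht => half_mul_log_pow_le_pow_mul_log_pow hnk m ht.1 ht.2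
    _ ≤ ∫ t in Ioo 0 1, t ^ n * log (1 / (1 - t)) ^ m :=
        setIntegral_mono_set (integrableOn_pow_mul_log_pow n m)
          (ae_restrict_of_forall_mem measurableSet_Ioo fun t ht =>
            mul_nonneg (pow_nonneg ht.1.le n)
              (pow_nonneg (log_one_div_one_sub_nonneg ht.1.le ht.2) m))
          hsub.eventuallyLE

lemma log_pow_div_le_of_le_of_le_add {m n k : ℕ} (hnk : n ≤ k) (hkn : k ≤ n + m) :
    log (n + 2) ^ m / (n + 1) ≤ (m + 1) * (log (k + 2) ^ m / (k + 1)) := by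
  have hlog : 0 ≤ log ((n : ℝ) + 2) :=
    log_nonneg (by linarith [(n.cast_nonneg : (0 : ℝ) ≤ n)])
  have hnk' : (n : ℝ) ≤ k := by exact_mod_cast hnk
  have hkn' : (k : ℝ) ≤ n + m := by exact_mod_cast hkn
  calc log (n + 2) ^ m / (n + 1) ≤ log (k + 2) ^ m / (n + 1) := by gcongr
    _ ≤ (m + 1) * (log (k + 2) ^ m / (k + 1)) := by
        rw [mul_div_assoc', div_le_div_iff₀ (by positivity) (by positivity)]
        have hL : 0 ≤ log ((k : ℝ) + 2) ^ m :=
          pow_nonneg (hlog.trans (log_le_log (by positivity) (by linarith))) m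
        have : (k : ℝ) + 1 ≤ (m + 1) * (n + 1) := by
          nlinarith [(m.cast_nonneg : (0 : ℝ) ≤ m), (n.cast_nonneg : (0 : ℝ) ≤ n)]
        nlinarith [mul_le_mul_of_nonneg_left this hL]

lemma pow_mul_one_div_mul_pow {m k : ℕ} (hmk : m ≤ k) {t : ℝ} (ht : t ≠ 0) (y : ℝ) :
    t ^ k * (1 / t * y) ^ m = t ^ (k - m) * y ^ m := by
  rw [← pow_sub_mul_pow t hmk, mul_pow, one_div, inv_pow]
  field_simp

/-- Let `d` be a positive integer. There are constants `c, C > 0` such that for all `k ≥ d`,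
`∫₀¹ t^k·((1/t)·log(1/(1−t)))^{d−1} dt ≈ (log(k+2))^{d−1}/(k+1)`. -/
theorem stmt_4 (d : ℕ) (hd : 0 < d) :
    ∃ c C : ℝ, 0 < c ∧ 0 < C ∧ ∀ k : ℕ, d ≤ k →
      c * ((Real.log ((k : ℝ) + 2)) ^ (d - 1) / ((k : ℝ) + 1)) ≤
          (∫ t in Set.Ioo (0 : ℝ) 1, t ^ k * (1 / t * Real.log (1 / (1 - t))) ^ (d - 1)) ∧
      (∫ t in Set.Ioo (0 : ℝ) 1, t ^ k * (1 / t * Real.log (1 / (1 - t))) ^ (d - 1)) ≤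
          C * ((Real.log ((k : ℝ) + 2)) ^ (d - 1) / ((k : ℝ) + 1)) := by
  obtain ⟨m, rfl⟩ : ∃ m, d = m + 1 := ⟨d - 1, by omega⟩
  refine ⟨1 / 4, (m + 1) * (1 + 2 ^ (m + 1) * (2 * m + 3) ^ m), by norm_num, by positivity,
    fun k hk => ?_⟩
  rw [Nat.add_sub_cancel, setIntegral_congr_fun measurableSet_Ioo
    fun t ht => pow_mul_one_div_mul_pow (by omega) ht.1.ne' (log (1 / (1 - t)))]
  refine ⟨le_setIntegral_pow_mul_log_pow (k.sub_le m) m, ?_⟩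
  calc _ ≤ _ := setIntegral_pow_mul_log_pow_le (by omega) m
    _ ≤ _ := mul_le_mul_of_nonneg_left
        (log_pow_div_le_of_le_of_le_add (k.sub_le m) (by omega)) (by positivity)
    _ = _ := by ring
end

section
/- Let d ≥ 2 be an integer. There exist constants c, C > 0 such that for all integers k ≥ 2: c·(log(k+2))^{d−1}/(k+1) ≤ Σ_{n=0}^{k−1} (log(n+2))^{d−2}/((n+1)(n+k+1)) ≤ C·(log(k+2))^{d−1}/(k+1). -/
/-!
Write `m = d - 2`. For `n < k` the weight `1 / (n + k + 1)` lies between `1 / (2 (k + 1))` and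
`1 / (k + 1)`, so the sum is comparable to `T / (k + 1)` with `T = ∑_{n<k} log (n + 2) ^ m / (n + 1)`.
Since `log (n + 2) - log (n + 1) ≈ 1 / (n + 1)`, the terms of `T` are comparable to the increments
of `log (n + 2) ^ (m + 1) / (m + 1)`, so `T` telescopes to order `log (k + 2) ^ (m + 1)`.
-/

open Finset Real

section PowSubPow

variable {R : Type*} [CommRing R] [LinearOrder R] [IsStrictOrderedRing R] {a b : R}

lemma mul_pow_mul_sub_le_pow_succ_sub_pow_succ (n : ℕ) (ha : 0 ≤ a) (hab : a ≤ b) :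
    (n + 1) * a ^ n * (b - a) ≤ b ^ (n + 1) - a ^ (n + 1) := by
  rw [← geom_sum₂_mul, Nat.add_sub_cancel]
  gcongr ?_ * _
  have := card_nsmul_le_sum (range (n + 1)) (fun i ↦ b ^ i * a ^ (n - i)) (a ^ n) fun i hi ↦ by
    calc a ^ n = a ^ i * a ^ (n - i) := by
          rw [← pow_add, Nat.add_sub_cancel' (Nat.lt_succ_iff.1 (mem_range.1 hi))]
      _ ≤ b ^ i * a ^ (n - i) := by gcongr
  simpa using this

lemma pow_succ_sub_pow_succ_le_mul_pow_mul_sub (n : ℕ) (ha : 0 ≤ a) (hab : a ≤ b) :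
    b ^ (n + 1) - a ^ (n + 1) ≤ (n + 1) * b ^ n * (b - a) := by
  rw [← geom_sum₂_mul, Nat.add_sub_cancel]
  gcongr ?_ * _
  have := sum_le_card_nsmul (range (n + 1)) (fun i ↦ b ^ i * a ^ (n - i)) (b ^ n) fun i hi ↦ by
    calc b ^ i * a ^ (n - i) ≤ b ^ i * b ^ (n - i) := by
          gcongr
          exact pow_nonneg (ha.trans hab) i
      _ = b ^ n := by rw [← pow_add, Nat.add_sub_cancel' (Nat.lt_succ_iff.1 (mem_range.1 hi))]
  simpa using this

end PowSubPow

namespace Real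

lemma inv_add_one_le_log_add_one_sub_log {x : ℝ} (hx : 0 < x) :
    (x + 1)⁻¹ ≤ log (x + 1) - log x := by
  have := one_sub_inv_le_log_of_pos (show 0 < (x + 1) / x by positivity)
  rw [log_div (by positivity) hx.ne', inv_div] at this
  convert this using 1
  field_simp
  ring

lemma log_add_one_sub_log_le_inv {x : ℝ} (hx : 0 < x) :
    log (x + 1) - log x ≤ x⁻¹ := by
  have := log_le_sub_one_of_pos (show 0 < (x + 1) / x by positivity)
  rw [log_div (by positivity) hx.ne'] at this
  convert this using 1
  field_simp
  ring

end Real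

lemma sum_div_add_le_sum_div (a : ℕ → ℝ) (ha : ∀ n, 0 ≤ a n) (k : ℕ) :
    ∑ n ∈ range k, a n / (n + k + 1) ≤ (∑ n ∈ range k, a n) / (k + 1) := by
  rw [sum_div]
  gcongr with n
  · exact ha n
  · simp

lemma sum_div_two_mul_le_sum_div_add (a : ℕ → ℝ) (ha : ∀ n, 0 ≤ a n) (k : ℕ) :
    (∑ n ∈ range k, a n) / (2 * (k + 1)) ≤ ∑ n ∈ range k, a n / (n + k + 1) := by
  rw [sum_div]
  gcongr with n hn
  · exact ha n
  · have : (n : ℝ) + 1 ≤ k := by exact_mod_cast mem_range.1 hn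
    linarith

noncomputable def logHarmonic (m k : ℕ) : ℝ :=
  ∑ n ∈ range k, log (n + 2) ^ m / (n + 1)

lemma log_add_two_pow_succ_sub_le {x : ℝ} (hx : 0 ≤ x) (m : ℕ) :
    log (x + 2) ^ (m + 1) - log (x + 1) ^ (m + 1) ≤ (m + 1) * (log (x + 2) ^ m / (x + 1)) := by
  have hlog : log (x + 1) ≤ log (x + 2) := log_le_log (by positivity) (by linarith)
  have hlog_nonneg : 0 ≤ log (x + 2) := log_nonneg (by linarith)
  have hdiff := log_add_one_sub_log_le_inv (show 0 < x + 1 by positivity)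
  rw [add_assoc, one_add_one_eq_two] at hdiff
  calc log (x + 2) ^ (m + 1) - log (x + 1) ^ (m + 1)
      ≤ (m + 1) * log (x + 2) ^ m * (log (x + 2) - log (x + 1)) :=
        pow_succ_sub_pow_succ_le_mul_pow_mul_sub m (log_nonneg (by linarith)) hlog
    _ ≤ (m + 1) * log (x + 2) ^ m * (x + 1)⁻¹ := by gcongr
    _ = (m + 1) * (log (x + 2) ^ m / (x + 1)) := by ring

lemma le_log_add_three_pow_succ_sub {x : ℝ} (hx : 0 ≤ x) (m : ℕ) :
    (m + 1) * (log (x + 2) ^ m / (x + 1)) ≤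
      3 * (log (x + 3) ^ (m + 1) - log (x + 2) ^ (m + 1)) := by
  have hlog : log (x + 2) ≤ log (x + 3) := log_le_log (by positivity) (by linarith)
  have hlog_nonneg : 0 ≤ log (x + 2) := log_nonneg (by linarith)
  have hinv : (x + 1)⁻¹ ≤ 3 * (x + 3)⁻¹ := by
    rw [inv_eq_one_div, inv_eq_one_div, mul_one_div,
      div_le_div_iff₀ (by positivity) (by positivity)]
    linarith
  have hdiff := inv_add_one_le_log_add_one_sub_log (show 0 < x + 2 by positivity)
  rw [add_assoc, show (2 : ℝ) + 1 = 3 by norm_num] at hdiff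
  calc (m + 1) * (log (x + 2) ^ m / (x + 1))
      ≤ (m + 1) * log (x + 2) ^ m * (3 * (x + 3)⁻¹) := by
        rw [div_eq_mul_inv, ← mul_assoc]
        gcongr
    _ ≤ 3 * ((m + 1) * log (x + 2) ^ m * (log (x + 3) - log (x + 2))) := by
        rw [mul_left_comm]
        gcongr
    _ ≤ 3 * (log (x + 3) ^ (m + 1) - log (x + 2) ^ (m + 1)) := by
        gcongr
        exact mul_pow_mul_sub_le_pow_succ_sub_pow_succ m hlog_nonneg hlog

lemma log_add_one_pow_succ_le_logHarmonic (m k : ℕ) :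
    log (k + 1) ^ (m + 1) ≤ (m + 1) * logHarmonic m k := by
  have telescope := sum_range_sub (fun n : ℕ ↦ log ((n : ℝ) + 1) ^ (m + 1)) k
  norm_num [add_assoc] at telescope
  rw [← sum_sub_distrib] at telescope
  rw [← telescope, logHarmonic, mul_sum]
  exact sum_le_sum fun n _ ↦ log_add_two_pow_succ_sub_le n.cast_nonneg m

lemma logHarmonic_le (m k : ℕ) :
    (m + 1) * logHarmonic m k ≤ 3 * log (k + 2) ^ (m + 1) := by
  have telescope := sum_range_sub (fun n : ℕ ↦ log ((n : ℝ) + 2) ^ (m + 1)) k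
  norm_num [add_assoc] at telescope
  rw [← sum_sub_distrib] at telescope
  have hlog2 : 0 ≤ log 2 ^ (m + 1) := pow_nonneg (log_nonneg one_le_two) _
  calc (m + 1) * logHarmonic m k
      ≤ 3 * ∑ n ∈ range k, (log (n + 3) ^ (m + 1) - log (n + 2) ^ (m + 1)) := by
        rw [logHarmonic, mul_sum, mul_sum]
        exact sum_le_sum fun n _ ↦ le_log_add_three_pow_succ_sub n.cast_nonneg m
    _ ≤ 3 * log (k + 2) ^ (m + 1) := by
        rw [telescope]
        linarith

lemma log_add_two_le_two_mul_log_add_one {x : ℝ} (hx : 1 ≤ x) :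
    log (x + 2) ≤ 2 * log (x + 1) := by
  rw [← log_rpow (by positivity), rpow_two]
  exact log_le_log (by positivity) (by nlinarith)

/-- Let `d ≥ 2`. There are constants `c, C > 0` such that for all `k ≥ 2`,
`Σ_{n=0}^{k−1} (log(n+2))^{d−2}/((n+1)(n+k+1)) ≈ (log(k+2))^{d−1}/(k+1)`. -/
theorem stmt_5 (d : ℕ) (hd : 2 ≤ d) :
    ∃ c C : ℝ, 0 < c ∧ 0 < C ∧ ∀ k : ℕ, 2 ≤ k →
      c * ((Real.log ((k : ℝ) + 2)) ^ (d - 1) / ((k : ℝ) + 1)) ≤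
          (∑ n ∈ Finset.range k,
            (Real.log ((n : ℝ) + 2)) ^ (d - 2) / (((n : ℝ) + 1) * ((n : ℝ) + (k : ℝ) + 1))) ∧
      (∑ n ∈ Finset.range k,
            (Real.log ((n : ℝ) + 2)) ^ (d - 2) / (((n : ℝ) + 1) * ((n : ℝ) + (k : ℝ) + 1))) ≤
          C * ((Real.log ((k : ℝ) + 2)) ^ (d - 1) / ((k : ℝ) + 1)) := by
  obtain ⟨m, rfl⟩ : ∃ m, d = m + 2 := ⟨d - 2, by omega⟩
  simp only [Nat.add_sub_cancel, show m + 2 - 1 = m + 1 by omega, ← div_div]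
  refine ⟨1 / ((m + 1) * 2 ^ (m + 2)), 3 / (m + 1), by positivity, by positivity, fun k hk ↦ ?_⟩
  have hk_one : (1 : ℝ) ≤ k := by exact_mod_cast (by omega : 1 ≤ k)
  have hterm (n : ℕ) : 0 ≤ log ((n : ℝ) + 2) ^ m / (n + 1) := by
    have : 0 ≤ log ((n : ℝ) + 2) := log_nonneg (by linarith [n.cast_nonneg (α := ℝ)])
    positivity
  constructor
  · calc 1 / ((m + 1) * 2 ^ (m + 2)) * (log (k + 2) ^ (m + 1) / (k + 1))
        = (log (k + 2) / 2) ^ (m + 1) / ((m + 1) * (2 * (k + 1))) := by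
          rw [div_pow, pow_succ 2 (m + 1)]
          field_simp
      _ ≤ log (k + 1) ^ (m + 1) / ((m + 1) * (2 * (k + 1))) := by
          have := log_add_two_le_two_mul_log_add_one hk_one
          gcongr
          · exact div_nonneg (log_nonneg (by linarith)) two_pos.le
          · linarith
      _ ≤ (m + 1) * logHarmonic m k / ((m + 1) * (2 * (k + 1))) :=
          div_le_div_of_nonneg_right (log_add_one_pow_succ_le_logHarmonic m k) (by positivity)
      _ = logHarmonic m k / (2 * (k + 1)) := by field_simp
      _ ≤ _ := sum_div_two_mul_le_sum_div_add _ hterm k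
  · calc _ ≤ logHarmonic m k / (k + 1) := sum_div_add_le_sum_div _ hterm k
      _ = (m + 1) * logHarmonic m k / ((m + 1) * (k + 1)) := by field_simp
      _ ≤ 3 * log (k + 2) ^ (m + 1) / ((m + 1) * (k + 1)) :=
          div_le_div_of_nonneg_right (logHarmonic_le m k) (by positivity)
      _ = 3 / (m + 1) * (log (k + 2) ^ (m + 1) / (k + 1)) := by field_simp
end

section
/- Let d ≥ 2 be an integer. Then the tail sums S₂(k) = Σ_{n=k}^∞ (log(n+2))^{d−2}/((n+1)(n+k+1)) satisfy S₂(k) = o((log(k+2))^{d−1}/(k+1)) as k → ∞; that is, ((k+1)/(log(k+2))^{d−1})·S₂(k) → 0 as k → ∞. -/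
/-!
Write `L = log (k + 2)` and `x = m + k + 2`. For `x ≤ (k + 2) ^ 2` we have `log x ≤ 2 L`; beyond
that point `(log x) ^ e ≤ C x ^ (1/4) ≤ C x ^ (3/4) / (k + 2)`. Summed against the weights, the
first range contributes at most `(2 L) ^ e / (k + 1)` (a telescoping series) and the second
`O(1 / (k + 1))` (a `5/4`-series). So `(k + 1) S₂(k) = O(L ^ e)`, and the normalized sum is
`O(1 / L)`.
-/

open Filter Real

theorem pow_log_le_mul_rpow (e : ℕ) {ε x : ℝ} (hε : 0 < ε) (hx : 1 ≤ x) :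
    log x ^ e ≤ (e / ε) ^ e * x ^ ε := by
  rcases Nat.eq_zero_or_pos e with rfl | he
  · simpa using one_le_rpow hx hε.le
  have hδ : 0 < ε / e := by positivity
  calc log x ^ e ≤ (x ^ (ε / e) / (ε / e)) ^ e :=
        pow_le_pow_left₀ (log_nonneg hx) (log_le_rpow_div (by linarith) hδ) e
    _ = (e / ε) ^ e * x ^ ε := by
        rw [div_pow, ← rpow_natCast (x ^ _), ← rpow_mul (by linarith),
          div_mul_cancel₀ _ (by positivity), div_eq_mul_inv, mul_comm, ← inv_pow, inv_div]

theorem pow_log_le_pow_two_mul_log_add (e : ℕ) {K x : ℝ} (hK : 1 ≤ K) (hx : 1 ≤ x) :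
    log x ^ e ≤ (2 * log K) ^ e + (4 * e) ^ e * x ^ (3 / 4 : ℝ) / K := by
  have hlogK : 0 ≤ log K := log_nonneg hK
  rcases le_or_gt x (K ^ 2) with hsmall | hlarge
  · have hlog : log x ≤ 2 * log K := by
      calc log x ≤ log (K ^ 2) := log_le_log (by linarith) hsmall
        _ = 2 * log K := by rw [log_pow]; norm_num
    exact le_add_of_le_of_nonneg (pow_le_pow_left₀ (log_nonneg hx) hlog e) (by positivity)
  · have hKx : K ≤ x ^ (1 / 2 : ℝ) := by
      rw [← sqrt_eq_rpow]; exact le_sqrt_of_sq_le hlarge.le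
    calc log x ^ e ≤ (4 * e) ^ e * x ^ (1 / 4 : ℝ) := by
          simpa [div_div_eq_mul_div, mul_comm] using
            pow_log_le_mul_rpow e (by norm_num : (0 : ℝ) < 1 / 4) hx
      _ ≤ (4 * e) ^ e * x ^ (3 / 4 : ℝ) / K := by
          rw [le_div_iff₀ (by linarith), mul_assoc]
          gcongr
          calc x ^ (1 / 4 : ℝ) * K ≤ x ^ (1 / 4 : ℝ) * x ^ (1 / 2 : ℝ) := by gcongr
            _ = x ^ (3 / 4 : ℝ) := by rw [← rpow_add (by linarith)]; norm_num
      _ ≤ _ := le_add_of_nonneg_left (by positivity)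

theorem sum_range_one_div_mul_add_one {a : ℝ} (ha : 0 < a) (n : ℕ) :
    ∑ i ∈ Finset.range n, 1 / ((i + a) * (i + a + 1)) = 1 / a - 1 / (n + a) := by
  induction n with
  | zero => simp
  | succ n ih =>
    rw [Finset.sum_range_succ, ih]
    push_cast
    field_simp
    ring

theorem hasSum_one_div_mul_add_one {a : ℝ} (ha : 0 < a) :
    HasSum (fun i : ℕ => 1 / ((i + a) * (i + a + 1))) (1 / a) := by
  rw [hasSum_iff_tendsto_nat_of_nonneg (fun i => by positivity)]
  simp only [sum_range_one_div_mul_add_one ha]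
  have hlim : Tendsto (fun n : ℕ => 1 / ((n : ℝ) + a)) atTop (nhds 0) :=
    tendsto_const_nhds.div_atTop (tendsto_natCast_atTop_atTop.atTop_add tendsto_const_nhds)
  simpa using tendsto_const_nhds.sub hlim

theorem rpow_three_quarters_div_le {m k : ℝ} (hm : 0 ≤ m) (hk : 0 ≤ k) :
    (m + k + 2) ^ (3 / 4 : ℝ) / ((m + k + 1) * (m + 2 * k + 1)) ≤
      4 / (m + 1) ^ (5 / 4 : ℝ) := by
  rw [div_le_div_iff₀ (by positivity) (by positivity)]
  calc (m + k + 2) ^ (3 / 4 : ℝ) * (m + 1) ^ (5 / 4 : ℝ)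
      ≤ (m + k + 2) ^ (3 / 4 : ℝ) * (m + k + 2) ^ (5 / 4 : ℝ) := by
        gcongr _ * ?_ ^ _
        linarith
    _ = (m + k + 2) ^ 2 := by rw [← rpow_add (by positivity)]; norm_num
    _ ≤ 4 * ((m + k + 1) * (m + 2 * k + 1)) := by nlinarith

theorem log_pow_div_le (e : ℕ) {m k : ℝ} (hm : 0 ≤ m) (hk : 1 ≤ k) :
    log (m + k + 2) ^ e / ((m + k + 1) * (m + 2 * k + 1)) ≤
      (2 * log (k + 2)) ^ e * (1 / ((m + k + 1) * (m + k + 2))) +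
        4 * (4 * e) ^ e / (k + 2) * (1 / (m + 1) ^ (5 / 4 : ℝ)) := by
  have hsplit := pow_log_le_pow_two_mul_log_add e (K := k + 2) (x := m + k + 2)
    (by linarith) (by linarith)
  have hlogk : 0 ≤ log (k + 2) := log_nonneg (by linarith)
  calc log (m + k + 2) ^ e / ((m + k + 1) * (m + 2 * k + 1))
      ≤ ((2 * log (k + 2)) ^ e + (4 * e) ^ e * (m + k + 2) ^ (3 / 4 : ℝ) / (k + 2)) /
          ((m + k + 1) * (m + 2 * k + 1)) := by gcongr
    _ = (2 * log (k + 2)) ^ e / ((m + k + 1) * (m + 2 * k + 1)) + (4 * e) ^ e / (k + 2) *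
          ((m + k + 2) ^ (3 / 4 : ℝ) / ((m + k + 1) * (m + 2 * k + 1))) := by ring
    _ ≤ (2 * log (k + 2)) ^ e / ((m + k + 1) * (m + k + 2)) + (4 * e) ^ e / (k + 2) *
          (4 / (m + 1) ^ (5 / 4 : ℝ)) := by
        gcongr _ / (_ * ?_) + _ * ?_
        · linarith
        · exact rpow_three_quarters_div_le hm (by linarith)
    _ = _ := by ring

/-- The term `n = m + k` of `S₂(k)`, with exponent `e = d - 2`. -/
noncomputable def tailTerm (e k m : ℕ) : ℝ :=
  log ((m : ℝ) + k + 2) ^ e / (((m : ℝ) + k + 1) * ((m : ℝ) + 2 * k + 1))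

theorem tailTerm_nonneg (e k m : ℕ) : 0 ≤ tailTerm e k m :=
  div_nonneg (pow_nonneg (log_nonneg (by linarith [m.cast_nonneg (α := ℝ)])) e) (by positivity)

theorem mul_tsum_tailTerm_le (e : ℕ) {k : ℕ} (hk : 1 ≤ k) :
    ((k : ℝ) + 1) * ∑' m, tailTerm e k m ≤
      (2 * log ((k : ℝ) + 2)) ^ e +
        4 * (4 * e) ^ e * ∑' m : ℕ, 1 / ((m : ℝ) + 1) ^ (5 / 4 : ℝ) := by
  have hk' : (1 : ℝ) ≤ k := by exact_mod_cast hk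
  set A := (2 * log ((k : ℝ) + 2)) ^ e
  set B := 4 * (4 * (e : ℝ)) ^ e
  set Z := ∑' m : ℕ, 1 / ((m : ℝ) + 1) ^ (5 / 4 : ℝ)
  have hu :
      HasSum (fun m : ℕ => 1 / (((m : ℝ) + k + 1) * ((m : ℝ) + k + 2))) (1 / (k + 1)) := by
    convert hasSum_one_div_mul_add_one (a := (k : ℝ) + 1) (by positivity) using 3
    ring
  have hv : Summable (fun m : ℕ => 1 / ((m : ℝ) + 1) ^ (5 / 4 : ℝ)) := by
    simpa using (summable_nat_add_iff 1).mpr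
      (summable_one_div_nat_rpow.mpr (by norm_num : (1 : ℝ) < 5 / 4))
  have hdom := (hu.summable.mul_left A).add (hv.mul_left (B / (k + 2)))
  have hterm := fun m : ℕ => log_pow_div_le e (m := m) (Nat.cast_nonneg m) hk'
  have hZ : 0 ≤ Z := tsum_nonneg fun m => by positivity
  calc ((k : ℝ) + 1) * ∑' m, tailTerm e k m
      ≤ (k + 1) * ∑' m : ℕ, (A * (1 / (((m : ℝ) + k + 1) * ((m : ℝ) + k + 2))) +
          B / (k + 2) * (1 / ((m : ℝ) + 1) ^ (5 / 4 : ℝ))) := by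
        refine mul_le_mul_of_nonneg_left ?_ (by positivity)
        exact (hdom.of_nonneg_of_le (tailTerm_nonneg e k) hterm).tsum_le_tsum hterm hdom
    _ = A + (k + 1) / (k + 2) * B * Z := by
        rw [(hu.summable.mul_left A).tsum_add (hv.mul_left _), tsum_mul_left, tsum_mul_left,
          hu.tsum_eq]
        field_simp
        rfl
    _ ≤ A + 1 * B * Z := by
        gcongr A + ?_ * B * Z
        rw [div_le_one (by positivity)]
        linarith
    _ = A + B * Z := by ring

theorem tendsto_pow_add_const_div_pow_succ (e : ℕ) (c C : ℝ) :
    Tendsto (fun x : ℝ => ((c * x) ^ e + C) / x ^ (e + 1)) atTop (nhds 0) := by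
  have h : Tendsto (fun x : ℝ => c ^ e * x⁻¹ + C * (x ^ (e + 1))⁻¹) atTop (nhds 0) := by
    simpa using (tendsto_inv_atTop_zero.const_mul (c ^ e)).add
      ((tendsto_inv_atTop_zero.comp (tendsto_pow_atTop (Nat.succ_ne_zero e))).const_mul C)
  refine h.congr' ?_
  filter_upwards [eventually_gt_atTop 0] with x hx
  field_simp
  ring

/-- Let `d ≥ 2`. The tail sums `S₂(k) = Σ_{n=k}^∞ (log(n+2))^{d−2}/((n+1)(n+k+1))`
satisfy `S₂(k) = o((log(k+2))^{d−1}/(k+1))` as `k → ∞`; that is,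
`((k+1)/(log(k+2))^{d−1})·S₂(k) → 0`.  (Here the tail sum is written with `n = m + k`.) -/
theorem stmt_6 (d : ℕ) (hd : 2 ≤ d) :
    Tendsto (fun k : ℕ =>
        ((k : ℝ) + 1) / (Real.log ((k : ℝ) + 2)) ^ (d - 1) *
          ∑' m : ℕ, (Real.log ((m : ℝ) + (k : ℝ) + 2)) ^ (d - 2) /
            (((m : ℝ) + (k : ℝ) + 1) * ((m : ℝ) + 2 * (k : ℝ) + 1)))
      atTop (nhds 0) := by
  obtain ⟨e, rfl⟩ : ∃ e, d = e + 2 := ⟨d - 2, by omega⟩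
  simp only [show e + 2 - 1 = e + 1 by omega, Nat.add_sub_cancel]
  have hlog : Tendsto (fun k : ℕ => log ((k : ℝ) + 2)) atTop atTop :=
    tendsto_log_atTop.comp (tendsto_natCast_atTop_atTop.atTop_add tendsto_const_nhds)
  have hlog_nonneg (k : ℕ) : 0 ≤ log ((k : ℝ) + 2) :=
    log_nonneg (by linarith [k.cast_nonneg (α := ℝ)])
  refine squeeze_zero' (Eventually.of_forall fun k => ?_) ?_
    ((tendsto_pow_add_const_div_pow_succ e 2
      (4 * (4 * e) ^ e * ∑' m : ℕ, 1 / ((m : ℝ) + 1) ^ (5 / 4 : ℝ))).comp hlog)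
  · have := hlog_nonneg k
    exact mul_nonneg (by positivity) (tsum_nonneg (tailTerm_nonneg e k))
  · filter_upwards [eventually_ge_atTop 1] with k hk
    have := hlog_nonneg k
    rw [div_mul_eq_mul_div]
    exact div_le_div_of_nonneg_right (mul_tsum_tailTerm_le e hk) (by positivity)
end

section
/- Let d be a positive integer and define w_d(t) = ((1/t)·log(1/(1−t)))^d for 0 < t < 1. Then there exist constants c, C > 0 and ε₀ ∈ (0,1) such that for all 0 < ε < ε₀: c·ε² ≤ (∫_{1−ε}^1 w_d(t) dt)·(∫_{1−ε}^1 (1/w_d(t)) dt) ≤ C·ε². -/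
/-!
Put `L = log (1/ε)`. On `(1 - ε, 1)` we have `w_d ≥ L^d`, hence `∫ 1/w_d ≤ ε / L^d`. Conversely
`1/t ≤ 2` there and, writing `u = 1 - t`, `log (1/u) · log 2 ≤ L · log (2ε/u)`; together with
`log x ^ d ≤ 2^d d! √x` (one term of the exponential series of `√x = exp (log x / 2)`) this
dominates `w_d(t)` by `C_d L^d √(ε/u)`, whose integral is `2 C_d L^d ε`. The factors `L^d` cancel
in the product. The lower bound `ε² ≤ (∫ w)(∫ 1/w)` is Cauchy–Schwarz: the quadratic
`λ ↦ ∫ (λ w - 1)² / w` is nonnegative, so its discriminant is nonpositive.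
-/

open MeasureTheory Real Set Filter
open scoped Nat

/-- `w_d(t) = ((1/t)·log(1/(1−t)))^d` for `0 < t < 1`. -/
noncomputable def wd (d : ℕ) (t : ℝ) : ℝ := (1 / t * Real.log (1 / (1 - t))) ^ d

theorem sq_measureReal_univ_le_integral_mul_integral_one_div {α : Type*} [MeasurableSpace α]
    (μ : Measure α) [IsFiniteMeasure μ] {f : α → ℝ} (hf_pos : ∀ᵐ x ∂μ, 0 < f x)
    (hf : Integrable f μ) (hf_inv : Integrable (fun x ↦ 1 / f x) μ) :
    μ.real univ ^ 2 ≤ (∫ x, f x ∂μ) * ∫ x, 1 / f x ∂μ := by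
  set A := ∫ x, f x ∂μ
  set B := ∫ x, 1 / f x ∂μ
  have hquad : ∀ l : ℝ, 0 ≤ A * (l * l) + (-2 * μ.real univ) * l + B := by
    intro l
    have hlin : Integrable (fun x ↦ l * l * f x - 2 * l) μ :=
      (hf.const_mul _).sub (integrable_const _)
    have hint : ∫ x, (l * l * f x - 2 * l + 1 / f x) ∂μ
        = A * (l * l) + (-2 * μ.real univ) * l + B := by
      rw [integral_add hlin hf_inv, integral_sub (hf.const_mul _) (integrable_const _),
        integral_const_mul, integral_const, smul_eq_mul]
      ring
    rw [← hint]
    refine integral_nonneg_of_ae (hf_pos.mono fun x hx ↦ ?_)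
    have hsq : l * l * f x - 2 * l + 1 / f x = (l * f x - 1) ^ 2 / f x := by
      field_simp; ring
    simp only [Pi.zero_apply, hsq]
    positivity
  have hdisc := discrim_le_zero hquad
  rw [discrim] at hdisc
  linarith

theorem integrableOn_Ioo_one_sub_rpow {r : ℝ} (hr : -1 < r) (ε : ℝ) :
    IntegrableOn (fun t : ℝ ↦ (1 - t) ^ r) (Ioo (1 - ε) 1) := by
  have h := ((intervalIntegral.intervalIntegrable_rpow' hr (a := 0) (b := ε)).comp_sub_left 1).symm
  simp only [sub_zero] at h
  exact h.def'.mono_set (Ioo_subset_Ioc_self.trans Ioc_subset_uIoc)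

theorem integral_Ioo_one_sub_rpow {r : ℝ} (hr : -1 < r) {ε : ℝ} (hε : 0 ≤ ε) :
    ∫ t in Ioo (1 - ε) 1, (1 - t) ^ r = ε ^ (r + 1) / (r + 1) := by
  rw [← integral_Ioc_eq_integral_Ioo, ← intervalIntegral.integral_of_le (by linarith),
    intervalIntegral.integral_comp_sub_left (fun u ↦ u ^ r), sub_self, sub_sub_cancel,
    integral_rpow (Or.inl hr), zero_rpow (by linarith), sub_zero]

theorem log_pow_le_rpow_half (d : ℕ) {x : ℝ} (hx : 1 ≤ x) :
    log x ^ d ≤ 2 ^ d * d ! * x ^ (2⁻¹ : ℝ) := by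
  have h := Real.pow_div_factorial_le_exp _
    (mul_nonneg (log_nonneg hx) (inv_nonneg.2 zero_le_two)) d
  rw [← rpow_def_of_pos (by linarith), mul_pow, inv_pow, div_le_iff₀ (by positivity)] at h
  calc log x ^ d = 2 ^ d * (log x ^ d * (2 ^ d)⁻¹) := by field_simp
    _ ≤ 2 ^ d * (x ^ (2⁻¹ : ℝ) * d !) := by gcongr
    _ = _ := by ring

theorem log_one_div_mul_log_two_le {u ε : ℝ} (hu : 0 < u) (huε : u ≤ ε) (hε : ε ≤ 1 / 2) :
    log (1 / u) * log 2 ≤ log (1 / ε) * log (2 * ε / u) := by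
  have hε0 : 0 < ε := hu.trans_le huε
  have hsplit₁ : log (1 / u) = log (1 / ε) + log (ε / u) := by
    rw [← log_mul (by positivity) (by positivity)]; field_simp
  have hsplit₂ : log (2 * ε / u) = log 2 + log (ε / u) := by
    rw [← log_mul (by positivity) (by positivity)]; ring_nf
  have hlog2 : log 2 ≤ log (1 / ε) :=
    log_le_log (by norm_num) (by rw [le_div_iff₀ hε0]; linarith)
  have hratio : 0 ≤ log (ε / u) := log_nonneg (by rw [le_div_iff₀ hu]; linarith)
  rw [hsplit₁, hsplit₂]
  nlinarith

theorem log_one_div_pow_le {u ε : ℝ} (d : ℕ) (hu : 0 < u) (huε : u ≤ ε) (hε : ε ≤ 1 / 2) :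
    log (1 / u) ^ d ≤
      2 ^ (d + 1) * d ! / log 2 ^ d * log (1 / ε) ^ d * ε ^ (2⁻¹ : ℝ) * u ^ (-2⁻¹ : ℝ) := by
  have hε0 : 0 < ε := hu.trans_le huε
  have hlog2 : 0 < log 2 := log_pos one_lt_two
  have hL : 0 ≤ log (1 / ε) := log_nonneg (by rw [le_div_iff₀ hε0]; linarith)
  have hx : 1 ≤ 2 * ε / u := by rw [le_div_iff₀ hu]; linarith
  have hsqrt : (2 * ε / u) ^ (2⁻¹ : ℝ) ≤ 2 * (ε ^ (2⁻¹ : ℝ) * u ^ (-2⁻¹ : ℝ)) := by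
    rw [div_rpow (by positivity) hu.le, mul_rpow zero_le_two hε0.le, rpow_neg hu.le, mul_div_assoc,
      div_eq_mul_inv]
    gcongr
    exact rpow_le_self_of_one_le one_le_two (by norm_num)
  have key : (log (1 / u) * log 2) ^ d ≤
      log (1 / ε) ^ d * (2 ^ d * d ! * (2 * (ε ^ (2⁻¹ : ℝ) * u ^ (-2⁻¹ : ℝ)))) := by
    calc (log (1 / u) * log 2) ^ d ≤ (log (1 / ε) * log (2 * ε / u)) ^ d :=
          pow_le_pow_left₀ (mul_nonneg (log_nonneg (by rw [le_div_iff₀ hu]; linarith)) hlog2.le)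
            (log_one_div_mul_log_two_le hu huε hε) d
      _ = log (1 / ε) ^ d * log (2 * ε / u) ^ d := mul_pow _ _ _
      _ ≤ _ := by
          gcongr
          exact (log_pow_le_rpow_half d hx).trans (mul_le_mul_of_nonneg_left hsqrt (by positivity))
  rw [mul_pow, ← le_div_iff₀ (by positivity)] at key
  exact key.trans_eq (by ring)

noncomputable def wdConst (d : ℕ) : ℝ := 2 ^ (2 * d + 1) * d ! / log 2 ^ d

section wd

variable {d : ℕ} {ε t : ℝ}

theorem measurable_wd (d : ℕ) : Measurable (wd d) := by
  unfold wd; fun_prop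

theorem wd_pos (ht : t ∈ Ioo 0 1) : 0 < wd d t := by
  obtain ⟨ht₀, ht₁⟩ := ht
  have : 0 < log (1 / (1 - t)) := log_pos (by rw [lt_div_iff₀ (by linarith)]; linarith)
  unfold wd; positivity

theorem log_one_div_pow_le_wd (hε : ε ≤ 1) (ht : t ∈ Ioo (1 - ε) 1) :
    log (1 / ε) ^ d ≤ wd d t := by
  obtain ⟨ht₁, ht₂⟩ := ht
  have hε0 : 0 < ε := by linarith
  have hL : 0 ≤ log (1 / ε) := log_nonneg (by rw [le_div_iff₀ hε0]; linarith)
  have hlog : log (1 / ε) ≤ log (1 / (1 - t)) :=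
    log_le_log (by positivity) (one_div_le_one_div_of_le (by linarith) (by linarith))
  unfold wd
  gcongr
  calc log (1 / ε) ≤ log (1 / (1 - t)) := hlog
    _ ≤ 1 / t * log (1 / (1 - t)) :=
        le_mul_of_one_le_left (hL.trans hlog) (by rw [le_div_iff₀ (by linarith)]; linarith)

theorem wd_le_two_pow_mul (ht : t ∈ Ico (1 / 2) 1) : wd d t ≤ 2 ^ d * log (1 / (1 - t)) ^ d := by
  obtain ⟨ht₁, ht₂⟩ := ht
  have hlog : 0 ≤ log (1 / (1 - t)) := log_nonneg (by rw [le_div_iff₀ (by linarith)]; linarith)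
  unfold wd
  rw [← mul_pow]
  gcongr
  rw [div_le_iff₀ (by linarith)]; linarith

theorem wd_le (hε : ε ≤ 1 / 2) (ht : t ∈ Ioo (1 - ε) 1) :
    wd d t ≤ wdConst d * log (1 / ε) ^ d * ε ^ (2⁻¹ : ℝ) * (1 - t) ^ (-2⁻¹ : ℝ) := by
  obtain ⟨ht₁, ht₂⟩ := ht
  calc wd d t ≤ 2 ^ d * log (1 / (1 - t)) ^ d := wd_le_two_pow_mul ⟨by linarith, ht₂⟩
    _ ≤ 2 ^ d * (2 ^ (d + 1) * d ! / log 2 ^ d * log (1 / ε) ^ d * ε ^ (2⁻¹ : ℝ) *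
          (1 - t) ^ (-2⁻¹ : ℝ)) := by
      gcongr
      exact log_one_div_pow_le d (by linarith) (by linarith) hε
    _ = _ := by rw [wdConst]; ring

theorem integrableOn_wd (hε : ε ≤ 1 / 2) : IntegrableOn (wd d) (Ioo (1 - ε) 1) := by
  refine Integrable.mono' ((integrableOn_Ioo_one_sub_rpow (r := -2⁻¹) (by norm_num) ε).const_mul
    (wdConst d * log (1 / ε) ^ d * ε ^ (2⁻¹ : ℝ)))
    (measurable_wd d).aestronglyMeasurable ((ae_restrict_iff' measurableSet_Ioo).2
      (Eventually.of_forall fun t ht ↦ ?_))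
  rw [norm_of_nonneg (wd_pos (d := d) (Ioo_subset_Ioo_left (by linarith) ht)).le]
  exact wd_le hε ht

theorem setIntegral_wd_le (hε₀ : 0 ≤ ε) (hε : ε ≤ 1 / 2) :
    ∫ t in Ioo (1 - ε) 1, wd d t ≤ 2 * wdConst d * log (1 / ε) ^ d * ε := by
  calc ∫ t in Ioo (1 - ε) 1, wd d t
      ≤ ∫ t in Ioo (1 - ε) 1, wdConst d * log (1 / ε) ^ d *
          ε ^ (2⁻¹ : ℝ) * (1 - t) ^ (-2⁻¹ : ℝ) :=
        setIntegral_mono_on (integrableOn_wd hε)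
          ((integrableOn_Ioo_one_sub_rpow (r := -2⁻¹) (by norm_num) ε).const_mul _)
          measurableSet_Ioo fun t ht ↦ wd_le hε ht
    _ = 2 * wdConst d * log (1 / ε) ^ d * (ε ^ (2⁻¹ : ℝ) * ε ^ (2⁻¹ : ℝ)) := by
        rw [integral_const_mul, integral_Ioo_one_sub_rpow (by norm_num) hε₀]
        norm_num
        ring
    _ = _ := by rw [← rpow_add' hε₀ (by norm_num)]; norm_num

theorem norm_one_div_wd_le (hε : ε < 1) (ht : t ∈ Ioo (1 - ε) 1) :
    ‖1 / wd d t‖ ≤ 1 / log (1 / ε) ^ d := by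
  have hL : 0 < log (1 / ε) :=
    log_pos (by rw [lt_div_iff₀ (by linarith [ht.1, ht.2])]; linarith)
  have hw := log_one_div_pow_le_wd (d := d) hε.le ht
  rw [norm_of_nonneg (one_div_pos.2 ((pow_pos hL d).trans_le hw)).le]
  exact one_div_le_one_div_of_le (pow_pos hL d) hw

theorem integrableOn_one_div_wd (hε : ε < 1) :
    IntegrableOn (fun t ↦ 1 / wd d t) (Ioo (1 - ε) 1) :=
  IntegrableOn.of_bound measure_Ioo_lt_top ((measurable_wd d).const_div 1).aestronglyMeasurable
    _ ((ae_restrict_iff' measurableSet_Ioo).2 (Eventually.of_forall fun _ ↦ norm_one_div_wd_le hε))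

theorem setIntegral_one_div_wd_le (hε₀ : 0 ≤ ε) (hε : ε < 1) :
    ∫ t in Ioo (1 - ε) 1, 1 / wd d t ≤ 1 / log (1 / ε) ^ d * ε := by
  have h := norm_setIntegral_le_of_norm_le_const (μ := volume) measure_Ioo_lt_top
    fun _ ↦ norm_one_div_wd_le (d := d) hε
  rw [volume_real_Ioo_of_le (by linarith), sub_sub_cancel] at h
  exact (le_norm_self _).trans h

end wd

theorem stmt_7_general (d : ℕ) :
    ∃ c C ε₀ : ℝ, 0 < c ∧ 0 < C ∧ 0 < ε₀ ∧ ε₀ < 1 ∧ ∀ ε : ℝ, 0 < ε → ε < ε₀ →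
      c * ε ^ 2 ≤ (∫ t in Set.Ioo (1 - ε) 1, wd d t) * (∫ t in Set.Ioo (1 - ε) 1, 1 / wd d t) ∧
      (∫ t in Set.Ioo (1 - ε) 1, wd d t) * (∫ t in Set.Ioo (1 - ε) 1, 1 / wd d t) ≤
        C * ε ^ 2 := by
  refine ⟨1, 2 * wdConst d, 1 / 2, one_pos, by unfold wdConst; positivity, by norm_num, by norm_num,
    fun ε hε₀ hε ↦ ⟨?_, ?_⟩⟩
  · have h := sq_measureReal_univ_le_integral_mul_integral_one_div (volume.restrict (Ioo (1 - ε) 1))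
      (ae_restrict_of_forall_mem measurableSet_Ioo fun t ht ↦
        wd_pos (d := d) (Ioo_subset_Ioo_left (by linarith) ht))
      (integrableOn_wd hε.le) (integrableOn_one_div_wd (by linarith))
    rwa [measureReal_restrict_apply_univ, volume_real_Ioo_of_le (by linarith), sub_sub_cancel,
      ← one_mul (ε ^ 2)] at h
  · have hL : 0 < log (1 / ε) ^ d :=
      pow_pos (log_pos (by rw [lt_div_iff₀ hε₀]; linarith)) d
    have hA₀ : 0 ≤ ∫ t in Ioo (1 - ε) 1, wd d t :=
      setIntegral_nonneg measurableSet_Ioo fun t ht ↦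
        (wd_pos (d := d) (Ioo_subset_Ioo_left (by linarith) ht)).le
    calc _ ≤ (2 * wdConst d * log (1 / ε) ^ d * ε) * (1 / log (1 / ε) ^ d * ε) :=
          mul_le_mul_of_nonneg (setIntegral_wd_le hε₀.le hε.le)
            (setIntegral_one_div_wd_le hε₀.le (by linarith)) hA₀
            (mul_nonneg (one_div_nonneg.2 hL.le) hε₀.le)
      _ = 2 * wdConst d * ε ^ 2 := by field_simp

/-- Let `d` be a positive integer. Then
`(∫_{1−ε}^1 w_d(t) dt)·(∫_{1−ε}^1 (1/w_d(t)) dt) ≈ ε²` as `ε → 0`. -/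
theorem stmt_7 (d : ℕ) (hd : 0 < d) :
    ∃ c C ε₀ : ℝ, 0 < c ∧ 0 < C ∧ 0 < ε₀ ∧ ε₀ < 1 ∧ ∀ ε : ℝ, 0 < ε → ε < ε₀ →
      c * ε ^ 2 ≤ (∫ t in Set.Ioo (1 - ε) 1, wd d t) * (∫ t in Set.Ioo (1 - ε) 1, 1 / wd d t) ∧
      (∫ t in Set.Ioo (1 - ε) 1, wd d t) * (∫ t in Set.Ioo (1 - ε) 1, 1 / wd d t) ≤
        C * ε ^ 2 :=
  stmt_7_general d
end

section
/- Let d be a positive integer and define w_d(t) = ((1/t)·log(1/(1−t)))^d for 0 < t < 1. Then there exists a constant c > 0 such that for all 0 < h ≤ 1: (∫_{1−h}^1 w_d(t) dt)·(∫_{1−h}^1 (1/w_d(t)) dt) ≤ c·h². Consequently the radial weight W_d(z) = w_d(|z|²) on the unit disc satisfies the Bekollé–Bonami (B2) condition: there is c > 0 such that for every Carleson square S_h(e^{is}) = {re^{it} : 1−h < r < 1, |t−s| < h} with 0 < h ≤ 1, (∫_{S_h(e^{is})} W_d dA)·(∫_{S_h(e^{is})} (1/W_d) dA) ≤ c·h⁴.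 -/
/-- The radial weight `W_d(z) = w_d(|z|²)` for `z ≠ 0`, `W_d(0) = 1`. -/
noncomputable def Wd (d : ℕ) (z : ℂ) : ℝ := if z = 0 then 1 else wd d (‖z‖ ^ 2)

/-- The Carleson square `S_h(e^{is}) = {re^{it} : 1−h < r < 1, |t−s| < h}`. -/
noncomputable def carlesonSquare (h s : ℝ) : Set ℂ :=
  (fun p : ℝ × ℝ => (p.1 : ℂ) * Complex.exp (p.2 * Complex.I)) ''
    (Set.Ioo (1 - h) 1 ×ˢ Set.Ioo (s - h) (s + h))

open MeasureTheory Set Real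
open scoped ENNReal

lemma le_log_one_div_one_sub {t : ℝ} (ht : t < 1) : t ≤ log (1 / (1 - t)) := by
  simpa using one_sub_inv_le_log_of_pos (x := 1 / (1 - t)) (by simp; linarith)

lemma log_one_div_one_sub_le {t : ℝ} (ht : t < 1) : log (1 / (1 - t)) ≤ t / (1 - t) := by
  have hpos : 0 < 1 - t := by linarith
  have := log_le_sub_one_of_pos (x := 1 / (1 - t)) (by positivity)
  rwa [div_sub_one hpos.ne', sub_sub_cancel] at this

lemma one_le_one_div_mul_log {t : ℝ} (h0 : 0 < t) (h1 : t < 1) :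
    1 ≤ 1 / t * log (1 / (1 - t)) := by
  rw [one_div_mul_eq_div, le_div_iff₀ h0, one_mul]
  exact le_log_one_div_one_sub h1

lemma one_div_mul_log_le {t : ℝ} (h0 : 0 < t) (h1 : t < 1) :
    1 / t * log (1 / (1 - t)) ≤ 2 * (1 + log (1 / (1 - t))) := by
  have hlog : 0 ≤ log (1 / (1 - t)) := h0.le.trans (le_log_one_div_one_sub h1)
  rcases le_or_gt t (1 / 2) with ht | ht
  · have : log (1 / (1 - t)) ≤ 2 * t := (log_one_div_one_sub_le h1).trans <| by
      rw [div_le_iff₀ (by linarith)]; nlinarith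
    rw [one_div_mul_eq_div, div_le_iff₀ h0]
    nlinarith
  · have : 1 / t ≤ 2 := by rw [div_le_iff₀ h0]; linarith
    nlinarith

lemma one_add_log_le_mul_rpow {x ε : ℝ} (hx : 1 ≤ x) (hε : 0 < ε) :
    1 + log x ≤ (1 + 1 / ε) * x ^ ε := by
  have h1 : 1 ≤ x ^ ε := one_le_rpow hx hε.le
  have h2 : log x ≤ x ^ ε / ε := log_le_rpow_div (by linarith) hε
  rw [add_mul, one_mul, one_div_mul_eq_div]
  linarith

lemma one_add_log_pow_le (d : ℕ) {x : ℝ} (hx : 1 ≤ x) :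
    (1 + log x) ^ d ≤ (1 + 2 * d) ^ d * x ^ (1 / 2 : ℝ) := by
  rcases Nat.eq_zero_or_pos d with rfl | hd
  · simpa using one_le_rpow hx (by norm_num)
  have hε : (0 : ℝ) < 1 / (2 * d) := by positivity
  calc (1 + log x) ^ d ≤ ((1 + 2 * d) * x ^ (1 / (2 * d) : ℝ)) ^ d := by
        gcongr
        · linarith [log_nonneg hx]
        · simpa using one_add_log_le_mul_rpow hx hε
    _ = (1 + 2 * d) ^ d * x ^ (1 / 2 : ℝ) := by
        rw [mul_pow, ← rpow_mul_natCast (by linarith)]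
        congr 2
        field_simp

lemma integrableOn_Ioo_sub_rpow {a b r : ℝ} (hab : a ≤ b) (hr : -1 < r) :
    IntegrableOn (fun t => (b - t) ^ r) (Ioo a b) := by
  have := (intervalIntegral.intervalIntegrable_rpow' hr (a := 0) (b := b - a)).comp_sub_left b
  rw [sub_zero, sub_sub_cancel] at this
  exact (intervalIntegrable_iff_integrableOn_Ioo_of_le hab).1 this.symm

lemma integral_Ioo_sub_rpow {a b r : ℝ} (hab : a ≤ b) (hr : -1 < r) :
    ∫ t in Ioo a b, (b - t) ^ r = (b - a) ^ (r + 1) / (r + 1) := by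
  rw [← integral_Ioc_eq_integral_Ioo, ← intervalIntegral.integral_of_le hab,
    intervalIntegral.integral_comp_sub_left (fun x => x ^ r), integral_rpow (Or.inl hr), sub_self,
    zero_rpow (by linarith), sub_zero]

lemma integral_mul_integral_one_div_le {X : Type*} [MeasurableSpace X] {μ : Measure X}
    {s : Set X} {f g : X → ℝ} {m : ℝ} (hsm : MeasurableSet s) (hs : μ s ≠ ∞) (hm : 0 < m)
    (hmf : ∀ x ∈ s, m ≤ f x) (hfg : ∀ x ∈ s, f x ≤ g x) (hg : IntegrableOn g s μ) :
    (∫ x in s, f x ∂μ) * (∫ x in s, 1 / f x ∂μ) ≤ (∫ x in s, g x ∂μ) * (μ.real s / m) := by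
  have hf0 : ∀ x ∈ s, 0 ≤ f x := fun x hx => hm.le.trans (hmf x hx)
  have hf : ∫ x in s, f x ∂μ ≤ ∫ x in s, g x ∂μ := setIntegral_mono_of_nonneg hf0 hfg hg
  have hinv : ∫ x in s, 1 / f x ∂μ ≤ μ.real s / m := by
    calc ∫ x in s, 1 / f x ∂μ ≤ ∫ _ in s, 1 / m ∂μ :=
          setIntegral_mono_of_nonneg (fun x hx => by have := hf0 x hx; positivity)
            (fun x hx => one_div_le_one_div_of_le hm (hmf x hx)) (integrableOn_const hs)
      _ = μ.real s / m := by rw [setIntegral_const, smul_eq_mul, mul_one_div]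
  refine mul_le_mul hf hinv (setIntegral_nonneg hsm fun x hx => ?_)
    ((setIntegral_nonneg hsm hf0).trans hf)
  have := hf0 x hx
  positivity

lemma le_wd_of_mem {h t : ℝ} (hh : 0 < h) (h1 : h ≤ 1) (ht : t ∈ Ioo (1 - h) 1) (d : ℕ) :
    ((1 + log (1 / h)) / 2) ^ d ≤ wd d t := by
  obtain ⟨hlt, ht1⟩ := ht
  have ht0 : 0 < t := by linarith
  have hlog : log (1 / h) ≤ log (1 / (1 - t)) :=
    log_le_log (by positivity) (one_div_le_one_div_of_le (by linarith) (by linarith))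
  have hlog0 : 0 ≤ log (1 / (1 - t)) := ht0.le.trans (le_log_one_div_one_sub ht1)
  have hbase : log (1 / (1 - t)) ≤ 1 / t * log (1 / (1 - t)) :=
    le_mul_of_one_le_left hlog0 (by rw [le_div_iff₀ ht0]; linarith)
  have hbase1 := one_le_one_div_mul_log ht0 ht1
  exact pow_le_pow_left₀ (by linarith [log_nonneg (one_le_one_div hh h1)]) (by linarith) d

lemma wd_le_of_mem {h t : ℝ} (hh : 0 < h) (h1 : h ≤ 1) (ht : t ∈ Ioo (1 - h) 1) (d : ℕ) :
    wd d t ≤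
      (2 * (1 + 2 * d) * (1 + log (1 / h))) ^ d * h ^ (1 / 2 : ℝ) * (1 - t) ^ (-(1 / 2) : ℝ) := by
  obtain ⟨hlt, ht1⟩ := ht
  have ht0 : 0 < t := by linarith
  have hu : 0 < 1 - t := by linarith
  set A := 1 + log (1 / h)
  set x := h / (1 - t)
  have hA : 1 ≤ A := by linarith [log_nonneg (one_le_one_div hh h1)]
  have hx : 1 ≤ x := by rw [le_div_iff₀ hu]; linarith
  have hsplit : log (1 / (1 - t)) = log (1 / h) + log x := by
    rw [← log_mul (by positivity) (by positivity)]
    congr 1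
    simp only [x]
    field_simp
  have hbase : 1 / t * log (1 / (1 - t)) ≤ 2 * A * (1 + log x) := by
    have := one_div_mul_log_le ht0 ht1
    nlinarith [log_nonneg hx]
  calc wd d t ≤ (2 * A * (1 + log x)) ^ d :=
        pow_le_pow_left₀ (by linarith [one_le_one_div_mul_log ht0 ht1]) hbase d
    _ = (2 * A) ^ d * (1 + log x) ^ d := mul_pow _ _ _
    _ ≤ (2 * A) ^ d * ((1 + 2 * d) ^ d * x ^ (1 / 2 : ℝ)) := by
        gcongr
        exact one_add_log_pow_le d hx
    _ = _ := by
        rw [mul_pow (2 * (1 + 2 * (d : ℝ))), mul_pow 2 (1 + 2 * (d : ℝ)), mul_pow 2 A,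
          div_rpow hh.le hu.le, rpow_neg hu.le]
        ring

theorem integral_wd_mul_integral_one_div_wd_le (d : ℕ) {h : ℝ} (hh : 0 < h) (h1 : h ≤ 1) :
    (∫ t in Ioo (1 - h) 1, wd d t) * (∫ t in Ioo (1 - h) 1, 1 / wd d t) ≤
      2 * (4 * (1 + 2 * d)) ^ d * h ^ 2 := by
  have hA : 0 < 1 + log (1 / h) := by linarith [log_nonneg (one_le_one_div hh h1)]
  have hle : 1 - h ≤ 1 := by linarith
  have key := integral_mul_integral_one_div_le measurableSet_Ioo measure_Ioo_lt_top.ne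
    (by positivity) (fun t ht => le_wd_of_mem hh h1 ht d)
    (fun t ht => wd_le_of_mem hh h1 ht d)
    ((integrableOn_Ioo_sub_rpow hle (by norm_num)).const_mul _)
  rw [integral_const_mul, integral_Ioo_sub_rpow hle (by norm_num),
    Real.volume_real_Ioo_of_le hle, sub_sub_cancel] at key
  refine key.trans_eq ?_
  generalize 1 + log (1 / h) = A at hA ⊢
  have hsq : h ^ (1 / 2 : ℝ) * h ^ (1 / 2 : ℝ) = h := by
    rw [← rpow_add hh]; norm_num
  have h4 : (4 : ℝ) ^ d = 2 ^ d * 2 ^ d := by rw [← mul_pow]; norm_num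
  norm_num only [div_pow, mul_pow, h4]
  field_simp
  linear_combination hsq

lemma Complex.polarCoord_symm_eq_mul_exp (p : ℝ × ℝ) :
    Complex.polarCoord.symm p = p.1 * Complex.exp (p.2 * Complex.I) := by
  rw [Complex.polarCoord_symm_apply, Complex.exp_mul_I, ← Complex.ofReal_cos,
    ← Complex.ofReal_sin]

lemma Complex.injOn_polarCoord_symm {a b : ℝ} (hab : b - a ≤ 2 * π) :
    InjOn Complex.polarCoord.symm (Ioi 0 ×ˢ Ico a b) := by
  rintro ⟨r, θ⟩ ⟨hr, hθ⟩ ⟨ρ, φ⟩ ⟨hρ, hφ⟩ heq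
  have hrρ : r = ρ := by
    simpa [abs_of_pos (show (0 : ℝ) < r from hr), abs_of_pos (show (0 : ℝ) < ρ from hρ)]
      using congrArg norm heq
  subst hrρ
  rw [Complex.polarCoord_symm_eq_mul_exp, Complex.polarCoord_symm_eq_mul_exp,
    ← circleMap_zero, ← circleMap_zero] at heq
  exact congrArg (r, ·) (injOn_circleMap_of_abs_sub_le' (ne_of_gt hr) hab hθ hφ heq)

lemma Complex.setIntegral_image_polarCoord_symm {E : Type*} [NormedAddCommGroup E]
    [NormedSpace ℝ E] {R : Set (ℝ × ℝ)} (hR : MeasurableSet R)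
    (hinj : InjOn Complex.polarCoord.symm R) (f : ℂ → E) :
    ∫ z in Complex.polarCoord.symm '' R, f z = ∫ p in R, |p.1| • f (Complex.polarCoord.symm p) := by
  have himage : Complex.polarCoord.symm '' R =
      Complex.measurableEquivRealProd.symm '' (polarCoord.symm '' R) := by
    rw [image_image]; rfl
  rw [himage, Complex.volume_preserving_equiv_real_prod.symm.setIntegral_image_emb
      Complex.measurableEquivRealProd.symm.measurableEmbedding,
    integral_image_eq_integral_abs_det_fderiv_smul volume hR
      (fun p _ => (hasFDerivAt_polarCoord_symm p).hasFDerivWithinAt)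
      (show InjOn (Complex.measurableEquivRealProd.symm ∘ polarCoord.symm) R from hinj).of_comp]
  simp_rw [det_fderivPolarCoordSymm, Complex.measurableEquivRealProd_symm_polarCoord_symm_apply]

lemma setIntegral_Ioo_sq {E : Type*} [NormedAddCommGroup E] [NormedSpace ℝ E] {a b : ℝ}
    (ha : 0 ≤ a) (hab : a ≤ b) (g : ℝ → E) :
    ∫ t in Ioo (a ^ 2) (b ^ 2), g t = ∫ r in Ioo a b, (2 * r) • g (r ^ 2) := by
  have hmono : StrictMonoOn (fun r : ℝ => r ^ 2) (Ici 0) := pow_left_strictMonoOn₀ two_ne_zero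
  have hIoo : Ioo a b ⊆ Ici 0 := fun r hr => ha.trans hr.1.le
  rw [← (continuous_pow 2).continuousOn.image_Ioo_of_strictMonoOn hab
      (hmono.mono fun r hr => ha.trans hr.1),
    integral_image_eq_integral_abs_deriv_smul measurableSet_Ioo
      (fun r _ => (hasDerivAt_pow 2 r).hasDerivWithinAt) (hmono.injOn.mono hIoo)]
  refine setIntegral_congr_fun measurableSet_Ioo fun r hr => ?_
  simp [abs_of_nonneg (ha.trans hr.1.le)]

lemma carlesonSquare_eq_image (h s : ℝ) :
    carlesonSquare h s = Complex.polarCoord.symm '' (Ioo (1 - h) 1 ×ˢ Ioo (s - h) (s + h)) := by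
  simp only [carlesonSquare, Complex.polarCoord_symm_eq_mul_exp]

lemma setIntegral_carlesonSquare_of_radial {E : Type*} [NormedAddCommGroup E] [NormedSpace ℝ E]
    {g : ℝ → E} {G : ℂ → E} (hG : ∀ z, z ≠ 0 → G z = g (‖z‖ ^ 2)) {h : ℝ} (hh : 0 < h)
    (h1 : h ≤ 1) (s : ℝ) :
    ∫ z in carlesonSquare h s, G z = h • ∫ t in Ioo ((1 - h) ^ 2) 1, g t := by
  set R := Ioo (1 - h) 1 ×ˢ Ioo (s - h) (s + h)
  have hR : MeasurableSet R := measurableSet_Ioo.prod measurableSet_Ioo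
  have hinj : InjOn Complex.polarCoord.symm R :=
    (Complex.injOn_polarCoord_symm (a := s - h) (b := s - h + 2 * π) (by linarith)).mono <|
      prod_mono (Ioo_subset_Ioi_self.trans (Ioi_subset_Ioi (by linarith)))
        (Ioo_subset_Ico_self.trans (Ico_subset_Ico_right (by linarith [pi_gt_three])))
  have hradial : ∀ p ∈ R, |p.1| • G (Complex.polarCoord.symm p) = p.1 • g (p.1 ^ 2) := by
    rintro ⟨r, θ⟩ ⟨hr, -⟩
    have hr0 : 0 < r := by linarith [hr.1]
    have hnorm : ‖Complex.polarCoord.symm (r, θ)‖ = r := by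
      rw [Complex.norm_polarCoord_symm, abs_of_pos hr0]
    rw [hG _ (norm_pos_iff.1 (hnorm.symm ▸ hr0)), hnorm, abs_of_pos hr0]
  have hsq := setIntegral_Ioo_sq (by linarith : 0 ≤ 1 - h) (by linarith : 1 - h ≤ 1) g
  rw [one_pow] at hsq
  rw [carlesonSquare_eq_image, Complex.setIntegral_image_polarCoord_symm hR hinj,
    setIntegral_congr_fun hR hradial, Measure.volume_eq_prod, ← Measure.prod_restrict,
    integral_fun_fst (fun r : ℝ => r • g (r ^ 2)), hsq]
  simp_rw [mul_smul, integral_smul]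
  rw [measureReal_restrict_apply_univ, Real.volume_real_Ioo_of_le (by linarith), smul_smul]
  congr 1
  ring

theorem stmt_9_general (d : ℕ) :
    ∃ c : ℝ, 0 < c ∧
      (∀ h : ℝ, 0 < h → h ≤ 1 →
        (∫ t in Set.Ioo (1 - h) 1, wd d t) * (∫ t in Set.Ioo (1 - h) 1, 1 / wd d t) ≤
          c * h ^ 2) ∧
      (∀ h s : ℝ, 0 < h → h ≤ 1 →
        (∫ z in carlesonSquare h s, Wd d z) * (∫ z in carlesonSquare h s, 1 / Wd d z) ≤
          c * h ^ 4) := by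
  set c : ℝ := 2 * (4 * (1 + 2 * d)) ^ d
  have hc : 0 < c := by positivity
  refine ⟨4 * c, by positivity, fun h hh h1 => ?_, fun h s hh h1 => ?_⟩
  · exact (integral_wd_mul_integral_one_div_wd_le d hh h1).trans (by nlinarith [sq_nonneg h])
  have hW : ∀ z, z ≠ 0 → Wd d z = wd d (‖z‖ ^ 2) := fun z hz => if_neg hz
  have hW_inv : ∀ z, z ≠ 0 → 1 / Wd d z = 1 / wd d (‖z‖ ^ 2) := fun z hz => by rw [hW z hz]
  have hsq : (1 - h) ^ 2 = 1 - h * (2 - h) := by ring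
  rw [setIntegral_carlesonSquare_of_radial hW hh h1,
    setIntegral_carlesonSquare_of_radial (g := fun t => 1 / wd d t) hW_inv hh h1,
    hsq, smul_eq_mul, smul_eq_mul]
  have hB2 := integral_wd_mul_integral_one_div_wd_le d (h := h * (2 - h))
    (by nlinarith) (by nlinarith)
  calc _ = h ^ 2 * ((∫ t in Ioo (1 - h * (2 - h)) 1, wd d t) *
          ∫ t in Ioo (1 - h * (2 - h)) 1, 1 / wd d t) := by ring
    _ ≤ h ^ 2 * (c * (h * (2 - h)) ^ 2) := by gcongr
    _ ≤ h ^ 2 * (c * (h * 2) ^ 2) := by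
        gcongr
        · nlinarith
        · linarith
    _ = 4 * c * h ^ 4 := by ring

/-- Let `d` be a positive integer. There is `c > 0` such that for all `0 < h ≤ 1`,
`(∫_{1−h}^1 w_d)·(∫_{1−h}^1 1/w_d) ≤ c·h²`; consequently `W_d(z) = w_d(|z|²)` satisfies the
Bekollé–Bonami (B2) condition: for every Carleson square `S_h(e^{is})` with `0 < h ≤ 1`,
`(∫_{S_h(e^{is})} W_d dA)·(∫_{S_h(e^{is})} (1/W_d) dA) ≤ c·h⁴`. -/
theorem stmt_9 (d : ℕ) (hd : 0 < d) :
    ∃ c : ℝ, 0 < c ∧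
      (∀ h : ℝ, 0 < h → h ≤ 1 →
        (∫ t in Set.Ioo (1 - h) 1, wd d t) * (∫ t in Set.Ioo (1 - h) 1, 1 / wd d t) ≤
          c * h ^ 2) ∧
      (∀ h s : ℝ, 0 < h → h ≤ 1 →
        (∫ z in carlesonSquare h s, Wd d z) * (∫ z in carlesonSquare h s, 1 / Wd d z) ≤
          c * h ^ 4) :=
  stmt_9_general d
end

section
/- Let d be a positive integer. There exist a real number M > 1 and constants c, C > 0 such that the sequence a_n = (log(M·(n+1)))^{d−1}/((n+1)·(log M)^{d−1}), n ≥ 0, satisfies: (i) a_0 = 1 and a_n > 0 for all n; (ii) a_{n−1}·a_{n+1} ≥ a_n² for all n ≥ 1 (log-convexity, i.e. a_{n−1}/a_n ≤ a_n/a_{n+1}); and (iii) c·(log(n+2))^{d−1}/(n+1) ≤ a_n ≤ C·(log(n+2))^{d−1}/(n+1) for all n ≥ 0. (By the Agler–McCarthy criterion, the kernel Σ_n a_n (z̄w)^n therefore has the complete Nevanlinna–Pick property and defines an equivalent norm on D_d.) -/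
/-- `aSeq d M n = (log(M·(n+1)))^{d−1}/((n+1)·(log M)^{d−1})`. -/
noncomputable def aSeq (d : ℕ) (M : ℝ) (n : ℕ) : ℝ :=
  (Real.log (M * ((n : ℝ) + 1))) ^ (d - 1) / (((n : ℝ) + 1) * (Real.log M) ^ (d - 1))

/-!
With `M = exp d` and `e = d - 1`, `a_n = exp (F (n + 1)) / d ^ e` where
`F x = e * log (d + log x) - log x`. On `[1, ∞)` we have
`F'' x = (1 - e / L - e / L ^ 2) / x ^ 2` with `L = d + log x ≥ e + 1`, which is nonnegative,
so `F` is convex and midpoint convexity at `n + 1, n + 2, n + 3` is log-convexity of `a`.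
The two-sided bound comes from `log (n + 2) ≤ d + log (n + 1) ≤ (d + 1) / log 2 * log (n + 2)`.
-/

open Real Set

lemma convexOn_mul_log_add_log_sub_log {e c : ℝ} (he : 0 ≤ e) (hc : e + 1 ≤ c) :
    ConvexOn ℝ (Ici 1) (fun x => e * log (c + log x) - log x) := by
  have hL : ∀ x : ℝ, 1 ≤ x → e + 1 ≤ c + log x := fun x hx =>
    le_add_of_le_of_nonneg hc (log_nonneg hx)
  refine convexOn_of_hasDerivWithinAt2_nonneg (convex_Ici 1)
    (f' := fun x => (e / (c + log x) - 1) / x)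
    (f'' := fun x => (1 - e / (c + log x) - e / (c + log x) ^ 2) / x ^ 2) ?_ ?_ ?_ ?_
  · intro x hx
    have := hL x hx
    have : x ≠ 0 := (zero_lt_one.trans_le hx).ne'
    fun_prop (disch := first | assumption | positivity | linarith)
  all_goals
    rw [interior_Ici]
    intro x hx
    have hx0 : 0 < x := zero_lt_one.trans hx
    have hL0 : 0 < c + log x := by linarith [hL x hx.le]
  · refine HasDerivAt.hasDerivWithinAt ?_
    convert (((hasDerivAt_log hx0.ne').const_add c).log hL0.ne').const_mul e
      |>.fun_sub (hasDerivAt_log hx0.ne') using 1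
    field_simp
  · refine HasDerivAt.hasDerivWithinAt ?_
    convert (((hasDerivAt_const x e).fun_div ((hasDerivAt_log hx0.ne').const_add c)
      hL0.ne').sub_const 1).fun_div (hasDerivAt_id' x) hx0.ne' using 1
    congr 1
    field_simp
    ring
  · refine div_nonneg ?_ (sq_nonneg x)
    rw [sub_sub, sub_nonneg, div_add_div _ _ hL0.ne' (by positivity), div_le_one (by positivity)]
    nlinarith [hL x hx.le]

lemma exp_mul_log_sub_log (e : ℕ) {x y : ℝ} (hx : 0 < x) (hy : 0 < y) :
    exp (e * log y - log x) = y ^ e / x := by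
  rw [exp_sub, ← log_pow, exp_log (pow_pos hy e), exp_log hx]

lemma ConvexOn.exp_midpoint_sq_le {s : Set ℝ} {F : ℝ → ℝ} (hF : ConvexOn ℝ s F) {x y : ℝ}
    (hx : x ∈ s) (hy : y ∈ s) : exp (F ((x + y) / 2)) ^ 2 ≤ exp (F x) * exp (F y) := by
  have hmid := hF.2 hx hy (by norm_num : (0 : ℝ) ≤ 1 / 2) (by norm_num : (0 : ℝ) ≤ 1 / 2)
    (by norm_num)
  simp only [smul_eq_mul] at hmid
  rw [← exp_nat_mul, ← exp_add, exp_le_exp, show (x + y) / 2 = 1 / 2 * x + 1 / 2 * y by ring]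
  push_cast
  linarith

lemma sq_add_log_pow_div_le (e : ℕ) {c x : ℝ} (hc : e + 1 ≤ c) (hx : 1 ≤ x) :
    ((c + log (x + 1)) ^ e / (x + 1)) ^ 2
      ≤ (c + log x) ^ e / x * ((c + log (x + 2)) ^ e / (x + 2)) := by
  have hpos : ∀ t : ℝ, 1 ≤ t → 0 < c + log t := fun t ht => by
    linarith [log_nonneg ht, (Nat.cast_nonneg e : (0 : ℝ) ≤ e)]
  have h := (convexOn_mul_log_add_log_sub_log (Nat.cast_nonneg e) hc).exp_midpoint_sq_le
    (mem_Ici.2 hx) (mem_Ici.2 (by linarith : 1 ≤ x + 2))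
  rwa [show (x + (x + 2)) / 2 = x + 1 by ring,
    exp_mul_log_sub_log e (by linarith) (hpos _ (by linarith)),
    exp_mul_log_sub_log e (by linarith) (hpos _ hx),
    exp_mul_log_sub_log e (by linarith) (hpos _ (by linarith))] at h

lemma log_add_one_le_add_log {c x : ℝ} (hc : 1 ≤ c) (hx : 1 ≤ x) :
    log (x + 1) ≤ c + log x := by
  calc log (x + 1) ≤ log (2 * x) := log_le_log (by linarith) (by linarith)
    _ = log 2 + log x := log_mul two_ne_zero (by positivity)
    _ ≤ c + log x := by linarith [log_le_sub_one_of_pos (zero_lt_two : (0 : ℝ) < 2)]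

lemma add_log_le_mul_log_add_one {c x : ℝ} (hc : 0 ≤ c) (hx : 1 ≤ x) :
    c + log x ≤ (c + 1) / log 2 * log (x + 1) := by
  have hlog2 : 0 < log 2 := log_pos one_lt_two
  have hlog2_le : log 2 ≤ 1 := by linarith [log_le_sub_one_of_pos (zero_lt_two : (0 : ℝ) < 2)]
  have h2 : log 2 ≤ log (x + 1) := log_le_log two_pos (by linarith)
  have h1 : log x ≤ log (x + 1) := log_le_log (by linarith) (by linarith)
  rw [div_mul_eq_mul_div, le_div_iff₀ hlog2]
  nlinarith [mul_le_mul_of_nonneg_left h2 hc, log_nonneg hx]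

lemma aSeq_exp (c : ℝ) (d n : ℕ) :
    aSeq d (exp c) n = (c + log (n + 1)) ^ (d - 1) / (n + 1) / c ^ (d - 1) := by
  rw [aSeq, log_mul (exp_ne_zero c) (by positivity), log_exp, div_div]

/-- Let `d` be a positive integer. There are `M > 1` and `c, C > 0` such that the sequence
`a_n = (log(M(n+1)))^{d−1}/((n+1)(log M)^{d−1})` satisfies: (i) `a_0 = 1` and `a_n > 0`;
(ii) log-convexity `a_{n−1}·a_{n+1} ≥ a_n²` for `n ≥ 1`; and (iii)
`c·(log(n+2))^{d−1}/(n+1) ≤ a_n ≤ C·(log(n+2))^{d−1}/(n+1)` for all `n`. -/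
theorem stmt_17 (d : ℕ) (hd : 0 < d) :
    ∃ M c C : ℝ, 1 < M ∧ 0 < c ∧ 0 < C ∧
      aSeq d M 0 = 1 ∧ (∀ n : ℕ, 0 < aSeq d M n) ∧
      (∀ n : ℕ, aSeq d M n * aSeq d M (n + 2) ≥ (aSeq d M (n + 1)) ^ 2) ∧
      (∀ n : ℕ,
        c * ((Real.log ((n : ℝ) + 2)) ^ (d - 1) / ((n : ℝ) + 1)) ≤ aSeq d M n ∧
        aSeq d M n ≤ C * ((Real.log ((n : ℝ) + 2)) ^ (d - 1) / ((n : ℝ) + 1))) := by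
  have hd_pred : ((d - 1 : ℕ) : ℝ) + 1 ≤ d := by exact_mod_cast (Nat.sub_add_cancel hd).le
  have hd_one : (1 : ℝ) ≤ d := by exact_mod_cast hd
  have hx (n : ℕ) : (1 : ℝ) ≤ n + 1 := by simp
  refine ⟨exp d, 1 / (d : ℝ) ^ (d - 1), ((d + 1) / log 2) ^ (d - 1) / (d : ℝ) ^ (d - 1),
    one_lt_exp_iff.2 (by positivity), by positivity, by positivity, by simp [aSeq_exp, hd.ne'],
    fun n => ?_, fun n => ?_, fun n => ?_⟩
  · have := log_nonneg (hx n)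
    rw [aSeq_exp]
    positivity
  · have h := sq_add_log_pow_div_le (d - 1) hd_pred (hx n)
    rw [show (n : ℝ) + 1 + 1 = ((n + 1 : ℕ) : ℝ) + 1 by push_cast; ring,
      show (n : ℝ) + 1 + 2 = ((n + 2 : ℕ) : ℝ) + 1 by push_cast; ring] at h
    rw [aSeq_exp, aSeq_exp, aSeq_exp, ge_iff_le, div_pow, div_mul_div_comm, ← sq]
    gcongr
  · have := log_nonneg (hx n)
    rw [aSeq_exp, show (n : ℝ) + 2 = n + 1 + 1 by ring]
    constructor
    · rw [one_div_mul_eq_div]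
      gcongr
      · exact log_nonneg (by linarith [hx n] : (1 : ℝ) ≤ n + 1 + 1)
      · exact log_add_one_le_add_log hd_one (hx n)
    · calc (d + log (n + 1)) ^ (d - 1) / (n + 1) / (d : ℝ) ^ (d - 1)
          ≤ ((d + 1) / log 2 * log (n + 1 + 1)) ^ (d - 1) / (n + 1) / (d : ℝ) ^ (d - 1) := by
            gcongr
            exact add_log_le_mul_log_add_one (by positivity) (hx n)
        _ = _ := by rw [mul_pow]; ring
end
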